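/- Let n = 4q + i and k = 2q + 2m + i − 1 with i ∈ {1,3} and 0 ≤ m ≤ q − 2 (so n is odd, k even), and let h = (n−k−1)/2 = q − m. If h divides n, then rn_k(C_n) = LB(n,k) + (h−1)/2, where LB(n,k) = ⌈(3k+3−n)/2⌉·(n−1)/2. -/

import Mathlib

/-- Distance between two vertices of the cycle `C_n` (vertices are `Fin n`). -/
def cycleDist (n : ℕ) (u v : Fin n) : ℕ := min (v - u).val (u - v).val

/-- A radio-`k`-labeling of the cycle `C_n`. -/
def IsRadioLabeling (n k : ℕ) (f : Fin n → ℕ) : Prop :=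
  ∀ u v : Fin n, u ≠ v → (k : ℤ) + 1 - cycleDist n u v ≤ |(f u : ℤ) - (f v : ℤ)|

/-- The span of a labeling: largest label minus smallest label. -/
def spanOf (n : ℕ) (f : Fin n → ℕ) : ℕ :=
  Finset.univ.sup fun u => Finset.univ.sup fun v => f u - f v

/-- The radio-`k`-number of `C_n`: minimum span over all radio-`k`-labelings. -/
noncomputable def rn (n k : ℕ) : ℕ :=
  sInf {s | ∃ f : Fin n → ℕ, IsRadioLabeling n k f ∧ spanOf n f = s}

namespace Radio

lemma mod_cases {x n : ℕ} (h2 : x < 2*n) : x % n = x ∨ (n ≤ x ∧ x % n = x - n) := by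
  rcases lt_or_ge x n with h | h
  · exact Or.inl (Nat.mod_eq_of_lt h)
  · exact Or.inr ⟨h, by rw [Nat.mod_eq_sub_mod h, Nat.mod_eq_of_lt (by omega)]⟩

lemma fin_sub_val {n : ℕ} (a b : Fin n) : (a - b).val = (n - b.val + a.val) % n := by
  rw [Fin.sub_def]

/-- value of both difference directions for distinct vertices -/
lemma sub_vals {n : ℕ} (u v : Fin n) (huv : u ≠ v) :
    0 < (v - u).val ∧ (v - u).val < n ∧ (u - v).val = n - (v - u).val := by
  have hU := u.isLt; have hV := v.isLt
  have hne : u.val ≠ v.val := fun h => huv (Fin.ext h)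
  have e1 : (v - u).val = (n - u.val + v.val) % n := fin_sub_val v u
  have e2 : (u - v).val = (n - v.val + u.val) % n := fin_sub_val u v
  rcases mod_cases (x := n - u.val + v.val) (n := n) (by omega) with h | ⟨h1, h⟩ <;>
    rcases mod_cases (x := n - v.val + u.val) (n := n) (by omega) with h' | ⟨h1', h'⟩ <;>
      omega

lemma cycleDist_pos {n : ℕ} {u v : Fin n} (huv : u ≠ v) : 0 < cycleDist n u v := by
  obtain ⟨h1, h2, h3⟩ := sub_vals u v huv
  unfold cycleDist; omega

lemma cycleDist_le {n : ℕ} {u v : Fin n} (huv : u ≠ v) : 2 * cycleDist n u v ≤ n := by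
  obtain ⟨h1, h2, h3⟩ := sub_vals u v huv
  unfold cycleDist; omega

/-- dist determined by a representative of the difference -/
lemma cycleDist_of_diff {n : ℕ} (u v : Fin n) {a : ℕ} (h1 : 0 < a) (h2 : a < n)
    (hv : (u.val + a) % n = v.val) : cycleDist n u v = min a (n - a) := by
  have hU := u.isLt; have hV := v.isLt
  have hne : u ≠ v := by
    intro h
    rw [h] at hv
    rcases mod_cases (x := v.val + a) (n := n) (by omega) with h | ⟨hh, h⟩ <;> omega
  obtain ⟨g1, g2, g3⟩ := sub_vals u v hne
  have e1 : (v - u).val = (n - u.val + v.val) % n := fin_sub_val v u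
  have hvu : (v - u).val = a := by
    rcases mod_cases (x := u.val + a) (n := n) (by omega) with h | ⟨hh, h⟩ <;>
      rcases mod_cases (x := n - u.val + v.val) (n := n) (by omega) with h' | ⟨hh', h'⟩ <;>
        omega
  unfold cycleDist; omega

lemma cycleDist_triple {n : ℕ} (u v w : Fin n) (h1 : u ≠ v) (h2 : v ≠ w) (h3 : u ≠ w) :
    cycleDist n u v + cycleDist n v w + cycleDist n u w ≤ n := by
  have hn : 0 < n := u.pos
  haveI : NeZero n := ⟨by omega⟩
  obtain ⟨a1, a2, a3⟩ := sub_vals u v h1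
  obtain ⟨b1, b2, b3⟩ := sub_vals v w h2
  obtain ⟨c1, c2, c3⟩ := sub_vals u w h3
  have key : (w - v) + (v - u) = w - u := sub_add_sub_cancel w v u
  have e : (w - u).val = ((w - v).val + (v - u).val) % n := by
    rw [← key, Fin.add_def]
  rcases mod_cases (x := (w - v).val + (v - u).val) (n := n) (by omega) with h | ⟨hh, h⟩ <;>
    unfold cycleDist <;> omega

/-- if two vertices are at distance exactly `h`, and `h ∣ n`, then same residue mod h -/
lemma cycleDist_residue {n h : ℕ} (u v : Fin n) (hd : h ∣ n) (hhn : 2*h < n) (hh : 0 < h)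
    (he : cycleDist n u v = h) : v.val % h = u.val % h := by
  have hU := u.isLt; have hV := v.isLt
  obtain ⟨s, hs⟩ := hd
  have hmodn : ∀ a : ℕ, (a + n) % h = a % h := by
    intro a
    have h1 := Nat.add_mul_mod_self_left a h s
    have h2 : a + n = a + h * s := by omega
    rw [h2]; exact h1
  have hmod2 : ∀ a : ℕ, (a + h) % h = a % h := fun a => Nat.add_mod_right a h
  have hne : u ≠ v := by
    intro hx; subst hx
    have hz : (u - u).val = 0 := by
      rw [fin_sub_val]
      have : n - u.val + u.val = n := by omega
      rw [this, Nat.mod_self]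
    unfold cycleDist at he
    omega
  obtain ⟨g1, g2, g3⟩ := sub_vals u v hne
  have e1 : (v - u).val = (n - u.val + v.val) % n := fin_sub_val v u
  have hcase : v.val + n = u.val + h ∨ v.val = u.val + h ∨
      u.val + n = v.val + h ∨ u.val = v.val + h := by
    unfold cycleDist at he
    rcases mod_cases (x := n - u.val + v.val) (n := n) (by omega) with h' | ⟨hh', h'⟩ <;> omega
  rcases hcase with hc | hc | hc | hc
  · have e2 : (v.val + n) % h = (u.val + h) % h := by rw [hc]
    have e3 := hmodn v.val; have e4 := hmod2 u.val; omega
  · have e2 : v.val % h = (u.val + h) % h := by rw [hc]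
    have e4 := hmod2 u.val; omega
  · have e2 : (u.val + n) % h = (v.val + h) % h := by rw [hc]
    have e3 := hmodn u.val; have e4 := hmod2 v.val; omega
  · have e2 : u.val % h = (v.val + h) % h := by rw [hc]
    have e4 := hmod2 v.val; omega



/-- cardinality of a residue class -/
lemma coset_card (h s c : ℕ) (hh : 0 < h) (hc : c < h) :
    ((Finset.range (h*s)).filter (fun x => x % h = c)).card = s := by
  have key : ((Finset.range (h*s)).filter (fun x => x % h = c)).card = (Finset.range s).card := by
    apply Finset.card_bij (fun x _ => x / h)
    · intro a ha
      simp only [Finset.mem_filter, Finset.mem_range] at ha ⊢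
      rw [Nat.div_lt_iff_lt_mul hh, mul_comm]
      exact ha.1
    · intro a ha b hb hab
      simp only [Finset.mem_filter, Finset.mem_range] at ha hb
      have ea := Nat.mod_add_div a h
      have eb := Nat.mod_add_div b h
      rw [ha.2] at ea; rw [hb.2] at eb
      rw [hab] at ea
      omega
    · intro b hb
      simp only [Finset.mem_range] at hb
      refine ⟨c + b * h, ?_, ?_⟩
      · simp only [Finset.mem_filter, Finset.mem_range]
        have hm : b * h + h ≤ s * h := by
          have h2 : b + 1 ≤ s := hb
          calc b * h + h = (b+1) * h := by ring
          _ ≤ s * h := Nat.mul_le_mul_right h h2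
        have hc2 : s * h = h * s := mul_comm s h
        refine ⟨by omega, ?_⟩
        rw [Nat.add_mul_mod_self_right]
        exact Nat.mod_eq_of_lt hc
      · rw [Nat.add_mul_div_right c b hh, Nat.div_eq_of_lt hc]
        omega
  rw [key, Finset.card_range]

theorem lower_bound (n h s : ℕ) (hn : n = h*s) (h3 : 3 ≤ h) (s5 : 5 ≤ s)
    (hodd : Odd h) (sodd : Odd s)
    (f : Fin n → ℕ) (hf : IsRadioLabeling n (n - 1 - 2*h) f) :
    (n - 3*h) * ((n - 1)/2) + (h-1)/2 ≤ spanOf n f := by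
  obtain ⟨U, hU⟩ := hodd
  obtain ⟨V, hV⟩ := sodd
  have hneq : n = 4*(U*V)+2*U+2*V+1 := by rw [hn, hU, hV]; ring
  have hU1 : 1 ≤ U := by omega
  have hV1 : 2 ≤ V := by omega
  have hsh : 5*h ≤ s*h := Nat.mul_le_mul_right h s5
  have hc5 : s * h = h * s := mul_comm s h
  have hn5 : 5*h ≤ n := by omega
  have hn0 : 0 < n := by omega
  haveI : NeZero n := ⟨by omega⟩
  have hK1 : ((n - 1 - 2*h : ℕ):ℤ) + 1 = (n:ℤ) - 2*h := by omega
  set N := (n - 1)/2 with hN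
  have hN2 : 2*N + 1 = n := by omega
  -- injectivity of f
  have hfinj : Function.Injective f := by
    intro a b hab
    by_contra hne
    have hr := hf a b hne
    have hD := cycleDist_le (u:=a) (v:=b) hne
    rw [hab] at hr
    simp only [sub_self, abs_zero] at hr
    have h2 : ((n - 1 - 2*h : ℕ):ℤ) + 1 ≤ (cycleDist n a b : ℤ) := by linarith
    rw [hK1] at h2
    have h4 : (n:ℤ) - 2*h ≤ (cycleDist n a b : ℤ) := h2
    have h5 : n ≤ cycleDist n a b + 2*h := by exact_mod_cast by linarith
    omega
  -- sorted order
  set σ := Tuple.sort f with hσ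
  have hmono : Monotone (f ∘ σ) := Tuple.monotone_sort f
  have hsm : StrictMono (f ∘ σ) := hmono.strictMono_of_injective (hfinj.comp σ.injective)
  set idx : ℕ → Fin n := fun t => ⟨min t (n-1), by omega⟩ with hidx
  set F : ℕ → ℕ := fun t => f (σ (idx t)) with hF
  have hidx_inj : ∀ a b, a ≤ n-1 → b ≤ n-1 → idx a = idx b → a = b := by
    intro a b ha hb hab
    have h2 : min a (n-1) = min b (n-1) := congrArg Fin.val hab
    omega
  have hFlt : ∀ a b, a < b → b ≤ n-1 → F a < F b := by
    intro a b hab hb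
    exact hsm (a := idx a) (b := idx b) (by
      simp only [hidx, Fin.mk_lt_mk]; omega)
  have hrad : ∀ a b : ℕ, a < b → b ≤ n-1 →
      ((n - 1 - 2*h : ℕ):ℤ) + 1 - cycleDist n (σ (idx a)) (σ (idx b)) ≤ (F b : ℤ) - F a := by
    intro a b hab hb
    have hne : σ (idx a) ≠ σ (idx b) := by
      intro hcon
      have := hidx_inj a b (by omega) hb (σ.injective hcon)
      omega
    have hr := hf _ _ hne
    have hlt : F a < F b := hFlt a b hab hb
    have habs : |(f (σ (idx a)) : ℤ) - f (σ (idx b))| = (F b : ℤ) - F a := by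
      have h1 : (F a : ℤ) ≤ (F b : ℤ) := by exact_mod_cast le_of_lt hlt
      have h2 : (f (σ (idx a)) : ℤ) = F a := rfl
      have h3 : (f (σ (idx b)) : ℤ) = F b := rfl
      rw [h2, h3, abs_sub_comm, abs_of_nonneg (by linarith)]
    rw [habs] at hr
    exact hr
  -- distance of the aligned pair
  set dd : ℕ → ℕ := fun t => cycleDist n (σ (idx (2*t))) (σ (idx (2*t+2))) with hdd
  -- pair bound
  have hpair : ∀ t, t < N →
      F (2*t) + (n - 3*h) + (if dd t = h then 0 else 1) ≤ F (2*t+2) := by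
    intro t ht
    have hb2 : 2*t+2 ≤ n-1 := by omega
    have r1 := hrad (2*t) (2*t+1) (by omega) (by omega)
    have r2 := hrad (2*t+1) (2*t+2) (by omega) (by omega)
    have r3 := hrad (2*t) (2*t+2) (by omega) hb2
    have hne12 : σ (idx (2*t)) ≠ σ (idx (2*t+1)) := by
      intro hcon; have := hidx_inj _ _ (by omega) (by omega) (σ.injective hcon); omega
    have hne23 : σ (idx (2*t+1)) ≠ σ (idx (2*t+2)) := by
      intro hcon; have := hidx_inj _ _ (by omega) (by omega) (σ.injective hcon); omega
    have hne13 : σ (idx (2*t)) ≠ σ (idx (2*t+2)) := by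
      intro hcon; have := hidx_inj _ _ (by omega) (by omega) (σ.injective hcon); omega
    have htri := cycleDist_triple (σ (idx (2*t))) (σ (idx (2*t+1))) (σ (idx (2*t+2)))
      hne12 hne23 hne13
    have hd3pos := cycleDist_pos hne13
    have htriZ : (cycleDist n (σ (idx (2*t))) (σ (idx (2*t+1))) : ℤ)
        + cycleDist n (σ (idx (2*t+1))) (σ (idx (2*t+2)))
        + cycleDist n (σ (idx (2*t))) (σ (idx (2*t+2))) ≤ n := by exact_mod_cast htri
    have hddt : (dd t : ℤ) = cycleDist n (σ (idx (2*t))) (σ (idx (2*t+2))) := by rw [hdd]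
    rw [hK1] at r1 r2 r3
    have h3n : 3*h ≤ n := by omega
    have hcast : ((n - 3*h : ℕ) : ℤ) = (n:ℤ) - 3*h := by omega
    split_ifs with hcase
    · have hc2 : (cycleDist n (σ (idx (2*t))) (σ (idx (2*t+2))) : ℤ) = h := by
        rw [← hddt, hcase]
      have hZ : ((F (2*t) : ℤ)) + ((n:ℤ) - 3*h) ≤ F (2*t+2) := by linarith
      have hgoal : ((F (2*t) + (n - 3*h) + 0 : ℕ) : ℤ) ≤ (F (2*t+2) : ℤ) := by
        push_cast [hcast]; linarith
      exact_mod_cast hgoal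
    · have hZ : ((F (2*t) : ℤ)) + ((n:ℤ) - 3*h) + 1 ≤ F (2*t+2) := by
        rcases lt_or_gt_of_ne hcase with hlt | hgt
        · have hd1 : (dd t : ℤ) < h := by exact_mod_cast hlt
          rw [hddt] at hd1; linarith
        · have hd1 : (h : ℤ) < dd t := by exact_mod_cast hgt
          rw [hddt] at hd1; linarith
      have hgoal : ((F (2*t) + (n - 3*h) + 1 : ℕ) : ℤ) ≤ (F (2*t+2) : ℤ) := by
        push_cast [hcast]; linarith
      exact_mod_cast hgoal
  -- indicator
  classical
  set P : ℕ → Prop := fun t => dd t ≠ h with hP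
  have hcardP : ∀ T, ((Finset.range (T+1)).filter P).card =
      ((Finset.range T).filter P).card + (if dd T = h then 0 else 1) := by
    intro T
    rw [Finset.range_add_one, Finset.filter_insert]
    by_cases hPT : dd T = h
    · rw [if_pos hPT, if_neg (show ¬ P T by simp only [hP]; simp [hPT])]
      omega
    · rw [if_neg hPT, if_pos (show P T by simp only [hP]; exact hPT),
        Finset.card_insert_of_notMem
          (fun hmem => absurd (Finset.mem_range.mp (Finset.mem_filter.mp hmem).1) (lt_irrefl T))]
  -- telescoping
  have htel : ∀ T, T ≤ N →
      F 0 + T*(n-3*h) + ((Finset.range T).filter P).card ≤ F (2*T) := by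
    intro T
    induction T with
    | zero =>
      intro _
      have hc0 : ((Finset.range 0).filter P).card = 0 := by
        rw [Finset.range_zero, Finset.filter_empty, Finset.card_empty]
      have he2 : F (2*0) = F 0 := congrArg F (by ring)
      omega
    | succ T ih =>
      intro hT
      have h1 := ih (by omega)
      have h2 := hpair T (by omega)
      have hc := hcardP T
      have he2 : F (2*(T+1)) = F (2*T+2) := congrArg F (by ring)
      have hmul : (T+1)*(n-3*h) = T*(n-3*h) + (n-3*h) := by ring
      omega
  -- residue stability
  have hρeq : ∀ t t', t ≤ t' → t' ≤ N →
      ((Finset.range t).filter P).card = ((Finset.range t').filter P).card →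
      (σ (idx (2*t'))).val % h = (σ (idx (2*t))).val % h := by
    intro t t' htt'
    induction t' with
    | zero =>
      intro _ _
      have ht0 : t = 0 := by omega
      subst ht0; rfl
    | succ t' ih =>
      intro hN' hbeq
      rcases Nat.eq_or_lt_of_le htt' with he | hlt
      · subst he; rfl
      · have htle : t ≤ t' := by omega
        have hmono1 : ((Finset.range t).filter P).card ≤ ((Finset.range t').filter P).card :=
          Finset.card_le_card (Finset.filter_subset_filter _ (Finset.range_subset_range.mpr htle))
        have hc := hcardP t'
        have hd : dd t' = h := by
          by_contra hcon
          rw [if_neg hcon] at hc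
          omega
        have heq2 : ((Finset.range t).filter P).card = ((Finset.range t').filter P).card := by
          rw [if_pos hd] at hc
          omega
        have hres := ih htle (by omega) heq2
        have h2h : 2*h < n := by omega
        have hr2 := cycleDist_residue (σ (idx (2*t'))) (σ (idx (2*t'+2))) ⟨s, hn⟩ h2h (by omega) hd
        have he3 : 2*(t'+1) = 2*t'+2 := by ring
        rw [he3, hr2, hres]
  -- counting
  have hcount : U ≤ ((Finset.range N).filter P).card := by
    by_contra hcon
    push_neg at hcon
    set Bc := ((Finset.range N).filter P).card with hBc
    have hble : ∀ t, t ≤ N → ((Finset.range t).filter P).card ≤ Bc := by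
      intro t ht
      exact Finset.card_le_card (Finset.filter_subset_filter _ (Finset.range_subset_range.mpr ht))
    have hkey := Finset.card_eq_sum_card_fiberwise
      (f := fun t => ((Finset.range t).filter P).card)
      (s := Finset.range (N+1)) (t := Finset.range (Bc+1))
      (by intro x hx
          simp only [Finset.mem_coe, Finset.mem_range] at hx ⊢
          exact Nat.lt_succ_of_le (hble x (by omega)))
    have hfiber : ∀ β ∈ Finset.range (Bc+1),
        ((Finset.range (N+1)).filter (fun t => ((Finset.range t).filter P).card = β)).card ≤ s := by
      intro β _
      rcases Finset.eq_empty_or_nonempty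
        ((Finset.range (N+1)).filter (fun t => ((Finset.range t).filter P).card = β)) with he | ⟨t0, ht0⟩
      · rw [he, Finset.card_empty]; exact Nat.zero_le s
      · simp only [Finset.mem_filter, Finset.mem_range] at ht0
        have hchlt : (σ (idx (2*t0))).val % h < h := Nat.mod_lt _ (by omega)
        have hcc := coset_card h s ((σ (idx (2*t0))).val % h) (by omega) hchlt
        rw [← hcc]
        apply Finset.card_le_card_of_injOn (fun t => (σ (idx (2*t))).val)
        · intro t ht
          simp only [Finset.mem_coe, Finset.mem_filter, Finset.mem_range] at ht ⊢
          have hlt2 : (σ (idx (2*t))).val < h * s := by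
            have := (σ (idx (2*t))).isLt
            omega
          refine ⟨hlt2, ?_⟩
          rcases le_total t t0 with hle | hle
          · exact (hρeq t t0 hle (by omega) (by omega)).symm
          · exact hρeq t0 t hle (by omega) (by omega)
        · intro a ha b hb hab
          simp only [Finset.coe_filter, Set.mem_setOf_eq, Finset.mem_range] at ha hb
          have h1 : σ (idx (2*a)) = σ (idx (2*b)) := Fin.ext hab
          have := hidx_inj _ _ (by omega) (by omega) (σ.injective h1)
          omega
    have htotal : N + 1 ≤ (Bc + 1) * s := by
      have h1 : (Finset.range (N+1)).card = N+1 := Finset.card_range _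
      rw [← h1, hkey]
      calc ∑ β ∈ Finset.range (Bc+1),
            ((Finset.range (N+1)).filter (fun t => ((Finset.range t).filter P).card = β)).card
          ≤ ∑ _β ∈ Finset.range (Bc+1), s := Finset.sum_le_sum hfiber
      _ = (Bc+1) * s := by rw [Finset.sum_const, Finset.card_range, smul_eq_mul]
    have hUs : (Bc + 1) * s ≤ U * s := Nat.mul_le_mul_right s (by omega)
    have hUsv : U * s = 2*(U*V) + U := by rw [hV]; ring
    have hNval : N = 2*(U*V) + U + V := by omega
    omega
  -- conclusion
  have hfin := htel N (le_refl N)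
  have hspan : F (2*N) - F 0 ≤ spanOf n f := by
    have h1 : f (σ (idx (2*N))) - f (σ (idx 0)) ≤
        Finset.univ.sup (fun v => f (σ (idx (2*N))) - f v) :=
      Finset.le_sup (f := fun v => f (σ (idx (2*N))) - f v) (Finset.mem_univ (σ (idx 0)))
    have h2 : Finset.univ.sup (fun v => f (σ (idx (2*N))) - f v) ≤ spanOf n f :=
      Finset.le_sup (f := fun u => Finset.univ.sup (fun v => f u - f v)) (Finset.mem_univ (σ (idx (2*N))))
    exact le_trans h1 h2
  have hmulc : N * (n - 3*h) = (n - 3*h) * N := mul_comm _ _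
  have hfinal : (h-1)/2 = U := by omega
  omega


/-! Construction: parameters H S with h = 2H+1, s = 2S+1, n = h*s -/

def nn (H S : ℕ) : ℕ := (2*H+1) * (2*S+1)
/-- odd-class index in phase q+1 -/
def jo (S q u : ℕ) : ℕ := 2*S + 2*(2*S+1)*q + (2*u+1)
/-- even-class index in phase q+1 -/
def je (S q u : ℕ) : ℕ := 2*S + 2*(2*S+1)*q + (2*u+2)

/-- coset of the j-th vertex -/
def cc (H S j : ℕ) : ℕ :=
  if j < 2*S+1 then 0
  else if ((j - (2*S+1)) % (2*(2*S+1))) % 2 = 0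
    then H - (j - (2*S+1)) / (2*(2*S+1))
    else 2*H - (j - (2*S+1)) / (2*(2*S+1))

/-- (unreduced) position within coset -/
def ww (H S j : ℕ) : ℕ :=
  if j < 2*S+1 then (if j % 2 = 0 then 2*S+1 - j/2 else S - (j-1)/2)
  else if ((j - (2*S+1)) % (2*(2*S+1))) % 2 = 0
    then 2*((j - (2*S+1)) / (2*(2*S+1))) + 2*S + 2 - ((j - (2*S+1)) % (2*(2*S+1)))/2
    else 3*S + 2*((j - (2*S+1)) / (2*(2*S+1))) + 2 - ((j - (2*S+1)) % (2*(2*S+1)))/2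

/-- vertex position of index j -/
def XX (H S j : ℕ) : ℕ := (cc H S j + (2*H+1) * ww H S j) % nn H S

/-- label correction -/
def corr (H S j : ℕ) : ℕ :=
  if j < 2*S+1 then 0
  else (j - (2*S+1)) / (2*(2*S+1)) + (if ((j - (2*S+1)) % (2*(2*S+1))) % 2 = 0 then H+1 else 1)

/-- label of index j -/
def LL (H S j : ℕ) : ℕ := j * ((2*H+1)*(S-1)) + corr H S j

section Char
variable {H S : ℕ}

lemma nn_pos : 0 < nn H S := by unfold nn; positivity

lemma char0_even (t : ℕ) (ht : t ≤ S) :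
    cc H S (2*t) = 0 ∧ ww H S (2*t) = 2*S+1-t ∧ corr H S (2*t) = 0 := by
  have hlt : 2*t < 2*S+1 := by omega
  refine ⟨?_, ?_, ?_⟩ <;> simp only [cc, ww, corr, if_pos hlt]
  rw [if_pos (by omega : 2*t % 2 = 0)]
  congr 1
  omega

lemma char0_odd (t : ℕ) (ht : t + 1 ≤ S) :
    cc H S (2*t+1) = 0 ∧ ww H S (2*t+1) = S - t ∧ corr H S (2*t+1) = 0 := by
  have hlt : 2*t+1 < 2*S+1 := by omega
  refine ⟨?_, ?_, ?_⟩ <;> simp only [cc, ww, corr, if_pos hlt]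
  rw [if_neg (by omega : ¬ (2*t+1) % 2 = 0)]
  congr 1
  omega

lemma jo_ge (q u : ℕ) : ¬ jo S q u < 2*S+1 := by unfold jo; omega

lemma je_ge (q u : ℕ) : ¬ je S q u < 2*S+1 := by unfold je; omega

lemma jo_div (q u : ℕ) (hu : u ≤ 2*S) :
    (jo S q u - (2*S+1)) / (2*(2*S+1)) = q ∧ (jo S q u - (2*S+1)) % (2*(2*S+1)) = 2*u := by
  have he : jo S q u - (2*S+1) = 2*(2*S+1)*q + 2*u := by unfold jo; omega
  rw [he]
  constructor
  · rw [Nat.mul_add_div (by omega), Nat.div_eq_of_lt (by omega)]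
    omega
  · rw [Nat.mul_add_mod, Nat.mod_eq_of_lt (by omega)]

lemma je_div (q u : ℕ) (hu : u ≤ 2*S) :
    (je S q u - (2*S+1)) / (2*(2*S+1)) = q ∧ (je S q u - (2*S+1)) % (2*(2*S+1)) = 2*u+1 := by
  have he : je S q u - (2*S+1) = 2*(2*S+1)*q + (2*u+1) := by unfold je; omega
  rw [he]
  constructor
  · rw [Nat.mul_add_div (by omega), Nat.div_eq_of_lt (by omega)]
    omega
  · rw [Nat.mul_add_mod, Nat.mod_eq_of_lt (by omega)]

lemma char_odd (q u : ℕ) (hu : u ≤ 2*S) :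
    cc H S (jo S q u) = H - q ∧ ww H S (jo S q u) = 2*q+2*S+2-u ∧
      corr H S (jo S q u) = q + (H+1) := by
  obtain ⟨hd, hm⟩ := jo_div (S := S) q u hu
  have hge := jo_ge (S := S) q u
  refine ⟨?_, ?_, ?_⟩
  · simp only [cc, if_neg hge, hm, hd]
    rw [if_pos (by omega : (2*u) % 2 = 0)]
  · simp only [ww, if_neg hge, hm, hd]
    rw [if_pos (by omega : (2*u) % 2 = 0)]
    omega
  · simp only [corr, if_neg hge, hm, hd]
    rw [if_pos (by omega : (2*u) % 2 = 0)]

lemma char_even (q u : ℕ) (hu : u ≤ 2*S) :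
    cc H S (je S q u) = 2*H - q ∧ ww H S (je S q u) = 3*S+2*q+2-u ∧
      corr H S (je S q u) = q + 1 := by
  obtain ⟨hd, hm⟩ := je_div (S := S) q u hu
  have hge := je_ge (S := S) q u
  refine ⟨?_, ?_, ?_⟩
  · simp only [cc, if_neg hge, hm, hd]
    rw [if_neg (by omega : ¬ (2*u+1) % 2 = 0)]
  · simp only [ww, if_neg hge, hm, hd]
    rw [if_neg (by omega : ¬ (2*u+1) % 2 = 0)]
    omega
  · simp only [corr, if_neg hge, hm, hd]
    rw [if_neg (by omega : ¬ (2*u+1) % 2 = 0)]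

lemma cc_lt (j : ℕ) (hH : 1 ≤ H) : cc H S j < 2*H+1 := by
  unfold cc
  generalize (j - (2*S+1)) / (2*(2*S+1)) = q'
  split_ifs <;> omega

/-- the split form of XX -/
lemma Xform (j : ℕ) (hH : 1 ≤ H) :
    XX H S j = cc H S j + (2*H+1) * (ww H S j % (2*S+1)) := by
  have hc := cc_lt (S := S) j hH
  have hsmall : cc H S j + (2*H+1) * (ww H S j % (2*S+1)) < nn H S := by
    have h1 : ww H S j % (2*S+1) ≤ 2*S := by
      have := Nat.mod_lt (ww H S j) (y := 2*S+1) (by omega)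
      omega
    have h2 : (2*H+1) * (ww H S j % (2*S+1)) ≤ (2*H+1) * (2*S) :=
      Nat.mul_le_mul_left _ h1
    unfold nn
    nlinarith
  have hmod : ww H S j ≡ ww H S j % (2*S+1) [MOD 2*S+1] := (Nat.mod_modEq _ _).symm
  have h3 : (2*H+1) * ww H S j ≡ (2*H+1) * (ww H S j % (2*S+1)) [MOD nn H S] := by
    unfold nn
    exact hmod.mul_left' _
  have hmeq : (cc H S j + (2*H+1) * ww H S j) % nn H S
      = (cc H S j + (2*H+1) * (ww H S j % (2*S+1))) % nn H S :=
    Nat.ModEq.add_left _ h3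
  unfold XX
  rw [hmeq, Nat.mod_eq_of_lt hsmall]

lemma X_mod_h (j : ℕ) (hH : 1 ≤ H) : XX H S j % (2*H+1) = cc H S j := by
  rw [Xform j hH, Nat.add_mul_mod_self_left, Nat.mod_eq_of_lt (cc_lt j hH)]

lemma X_div_h (j : ℕ) (hH : 1 ≤ H) : XX H S j / (2*H+1) = ww H S j % (2*S+1) := by
  rw [Xform j hH, Nat.add_mul_div_left _ _ (by omega : 0 < 2*H+1),
    Nat.div_eq_of_lt (cc_lt j hH)]
  omega

lemma XX_lt (j : ℕ) : XX H S j < nn H S := Nat.mod_lt _ nn_pos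

/-- classification of indices -/
lemma classify (j : ℕ) (hj : j ≤ nn H S - 1) :
    (∃ t, t ≤ S ∧ j = 2*t) ∨ (∃ t, t + 1 ≤ S ∧ j = 2*t+1) ∨
    (∃ q u, q + 1 ≤ H ∧ u ≤ 2*S ∧ j = jo S q u) ∨
    (∃ q u, q + 1 ≤ H ∧ u ≤ 2*S ∧ j = je S q u) := by
  rcases lt_or_ge j (2*S+1) with hlt | hge
  · rcases Nat.even_or_odd j with ⟨t, ht⟩ | ⟨t, ht⟩
    · exact Or.inl ⟨t, by omega, by omega⟩
    · exact Or.inr (Or.inl ⟨t, by omega, by omega⟩)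
  · have hd := Nat.div_add_mod (j - (2*S+1)) (2*(2*S+1))
    set q := (j - (2*S+1)) / (2*(2*S+1)) with hq
    set m := (j - (2*S+1)) % (2*(2*S+1)) with hm
    have hmlt : m < 2*(2*S+1) := Nat.mod_lt _ (by omega)
    have hqH : q + 1 ≤ H := by
      by_contra hcon
      have hq2 : H ≤ q := by omega
      have h2 : 2*(2*S+1)*H ≤ 2*(2*S+1)*q := Nat.mul_le_mul_left _ hq2
      have h3 : nn H S = 2*(2*S+1)*H + (2*S+1) := by unfold nn; ring
      omega
    rcases Nat.even_or_odd m with ⟨u, hu⟩ | ⟨u, hu⟩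
    · refine Or.inr (Or.inr (Or.inl ⟨q, u, hqH, by omega, ?_⟩))
      unfold jo; omega
    · refine Or.inr (Or.inr (Or.inr ⟨q, u, hqH, by omega, ?_⟩))
      unfold je; omega

/-- difference trick for mod injectivity -/
lemma mod_inj_close {a b s : ℕ} (hab : a ≤ b) (hd : b - a < s) (hm : a % s = b % s) :
    a = b := by
  have h1 : a ≡ b [MOD s] := hm
  have h2 : s ∣ b - a := (Nat.modEq_iff_dvd' hab).mp h1
  rcases Nat.eq_zero_of_dvd_of_lt h2 hd with h
  omega

lemma mod_inj_close' {a b s : ℕ} (hd1 : a ≤ b → b - a < s) (hd2 : b ≤ a → a - b < s)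
    (hm : a % s = b % s) : a = b := by
  rcases le_total a b with hab | hab
  · exact mod_inj_close hab (hd1 hab) hm
  · exact (mod_inj_close hab (hd2 hab) hm.symm).symm

/-- injectivity of XX on indices -/
lemma Xinj (hH : 1 ≤ H) (hS : 1 ≤ S) (j1 j2 : ℕ) (h1 : j1 ≤ nn H S - 1) (h2 : j2 ≤ nn H S - 1)
    (heq : XX H S j1 = XX H S j2) : j1 = j2 := by
  have hc : cc H S j1 = cc H S j2 := by
    rw [← X_mod_h j1 hH, ← X_mod_h j2 hH, heq]
  have hw : ww H S j1 % (2*S+1) = ww H S j2 % (2*S+1) := by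
    rw [← X_div_h j1 hH, ← X_div_h j2 hH, heq]
  rcases classify j1 h1 with ⟨t1, ht1, he1⟩ | ⟨t1, ht1, he1⟩ | ⟨q1, u1, hq1, hu1, he1⟩ | ⟨q1, u1, hq1, hu1, he1⟩ <;>
    rcases classify j2 h2 with ⟨t2, ht2, he2⟩ | ⟨t2, ht2, he2⟩ | ⟨q2, u2, hq2, hu2, he2⟩ | ⟨q2, u2, hq2, hu2, he2⟩ <;>
      subst he1 <;> subst he2
  -- 16 cases
  · obtain ⟨c1, w1, -⟩ := char0_even (H := H) t1 ht1
    obtain ⟨c2, w2, -⟩ := char0_even (H := H) t2 ht2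
    rw [w1, w2] at hw
    have := mod_inj_close' (a := 2*S+1-t1) (b := 2*S+1-t2) (s := 2*S+1)
      (by omega) (by omega) hw
    omega
  · obtain ⟨c1, w1, -⟩ := char0_even (H := H) t1 ht1
    obtain ⟨c2, w2, -⟩ := char0_odd (H := H) t2 ht2
    rw [w1, w2] at hw
    have := mod_inj_close' (a := 2*S+1-t1) (b := S - t2) (s := 2*S+1)
      (by omega) (by omega) hw
    omega
  · obtain ⟨c1, -, -⟩ := char0_even (H := H) t1 ht1
    obtain ⟨c2, -, -⟩ := char_odd (H := H) q2 u2 hu2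
    rw [c1, c2] at hc; omega
  · obtain ⟨c1, -, -⟩ := char0_even (H := H) t1 ht1
    obtain ⟨c2, -, -⟩ := char_even (H := H) q2 u2 hu2
    rw [c1, c2] at hc; omega
  · obtain ⟨c1, w1, -⟩ := char0_odd (H := H) t1 ht1
    obtain ⟨c2, w2, -⟩ := char0_even (H := H) t2 ht2
    rw [w1, w2] at hw
    have := mod_inj_close' (a := S - t1) (b := 2*S+1-t2) (s := 2*S+1)
      (by omega) (by omega) hw
    omega
  · obtain ⟨c1, w1, -⟩ := char0_odd (H := H) t1 ht1
    obtain ⟨c2, w2, -⟩ := char0_odd (H := H) t2 ht2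
    rw [w1, w2] at hw
    have := mod_inj_close' (a := S - t1) (b := S - t2) (s := 2*S+1)
      (by omega) (by omega) hw
    omega
  · obtain ⟨c1, -, -⟩ := char0_odd (H := H) t1 ht1
    obtain ⟨c2, -, -⟩ := char_odd (H := H) q2 u2 hu2
    rw [c1, c2] at hc; omega
  · obtain ⟨c1, -, -⟩ := char0_odd (H := H) t1 ht1
    obtain ⟨c2, -, -⟩ := char_even (H := H) q2 u2 hu2
    rw [c1, c2] at hc; omega
  · obtain ⟨c1, -, -⟩ := char_odd (H := H) q1 u1 hu1
    obtain ⟨c2, -, -⟩ := char0_even (H := H) t2 ht2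
    rw [c1, c2] at hc; omega
  · obtain ⟨c1, -, -⟩ := char_odd (H := H) q1 u1 hu1
    obtain ⟨c2, -, -⟩ := char0_odd (H := H) t2 ht2
    rw [c1, c2] at hc; omega
  · obtain ⟨c1, w1, -⟩ := char_odd (H := H) q1 u1 hu1
    obtain ⟨c2, w2, -⟩ := char_odd (H := H) q2 u2 hu2
    rw [c1, c2] at hc
    have hq : q1 = q2 := by omega
    subst hq
    rw [w1, w2] at hw
    have := mod_inj_close' (a := 2*q1+2*S+2-u1) (b := 2*q1+2*S+2-u2) (s := 2*S+1)
      (by omega) (by omega) hw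
    unfold jo; omega
  · obtain ⟨c1, -, -⟩ := char_odd (H := H) q1 u1 hu1
    obtain ⟨c2, -, -⟩ := char_even (H := H) q2 u2 hu2
    rw [c1, c2] at hc; omega
  · obtain ⟨c1, -, -⟩ := char_even (H := H) q1 u1 hu1
    obtain ⟨c2, -, -⟩ := char0_even (H := H) t2 ht2
    rw [c1, c2] at hc; omega
  · obtain ⟨c1, -, -⟩ := char_even (H := H) q1 u1 hu1
    obtain ⟨c2, -, -⟩ := char0_odd (H := H) t2 ht2
    rw [c1, c2] at hc; omega
  · obtain ⟨c1, -, -⟩ := char_even (H := H) q1 u1 hu1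
    obtain ⟨c2, -, -⟩ := char_odd (H := H) q2 u2 hu2
    rw [c1, c2] at hc; omega
  · obtain ⟨c1, w1, -⟩ := char_even (H := H) q1 u1 hu1
    obtain ⟨c2, w2, -⟩ := char_even (H := H) q2 u2 hu2
    rw [c1, c2] at hc
    have hq : q1 = q2 := by omega
    subst hq
    rw [w1, w2] at hw
    have := mod_inj_close' (a := 3*S+2*q1+2-u1) (b := 3*S+2*q1+2-u2) (s := 2*S+1)
      (by omega) (by omega) hw
    unfold je; omega

/-- congruence step lemmas -/
lemma Xstep (j j' v K : ℕ)
    (key : cc H S j + (2*H+1)*ww H S j + v = cc H S j' + (2*H+1)*ww H S j' + K * nn H S) :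
    (XX H S j + v) % nn H S = XX H S j' := by
  unfold XX
  rw [Nat.mod_add_mod, key, Nat.add_mul_mod_self_right]

lemma Xstep' (j j' v K : ℕ)
    (key : cc H S j + (2*H+1)*ww H S j + v + K * nn H S = cc H S j' + (2*H+1)*ww H S j') :
    (XX H S j + v) % nn H S = XX H S j' := by
  unfold XX
  rw [Nat.mod_add_mod, ← key, Nat.add_mul_mod_self_right]


lemma Gval (hH : 1 ≤ H) (hS : 2 ≤ S) : (2*H+1)*(S-1) = 2*(H*S)+S-2*H-1 := by
  have hWa : 2*H ≤ H*S := by nlinarith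
  zify [show 1 ≤ S by omega, show 2*H ≤ 2*(H*S)+S by omega,
    show 1 ≤ 2*(H*S)+S-2*H by omega]
  ring

lemma case_helper (hH : 1 ≤ H) (j j' v dv : ℕ)
    (hstep : (XX H S j + v) % nn H S = XX H S j')
    (hv1 : 0 < v) (hv2 : v < nn H S)
    (hdv1 : dv ≤ v) (hdv2 : dv ≤ nn H S - v)
    (hL : LL H S j + (nn H S - 2*(2*H+1)) ≤ LL H S j' + dv) :
    LL H S j + (nn H S - 2*(2*H+1)) ≤ LL H S j' +
      cycleDist (nn H S) ⟨XX H S j, XX_lt j⟩ ⟨XX H S j', XX_lt j'⟩ := by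
  have hd := cycleDist_of_diff (n := nn H S) ⟨XX H S j, XX_lt j⟩ ⟨XX H S j', XX_lt j'⟩
    hv1 hv2 hstep
  rw [hd]
  have hmin : dv ≤ min v (nn H S - v) := le_min hdv1 hdv2
  omega

lemma caseA1 (hH : 1 ≤ H) (hS : 2 ≤ S) (t : ℕ) (ht : t+1 ≤ S) :
    LL H S (2*(t)) + (nn H S - 2*(2*H+1)) ≤ LL H S (2*(t)+1) +
      cycleDist (nn H S) ⟨XX H S (2*(t)), XX_lt _⟩ ⟨XX H S (2*(t)+1), XX_lt _⟩ := by
  obtain ⟨hc1, hw1, hm1⟩ := char0_even (H := H) (S := S) (t) (by omega)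
  obtain ⟨hc2, hw2, hm2⟩ := char0_odd (H := H) (S := S) (t) (by omega)
  have hWa : 2*H ≤ H*S := by nlinarith
  have hWb : S ≤ H*S := by nlinarith
  have h4 : nn H S = 4*(H*S)+2*H+2*S+1 := by unfold nn; ring
  have hGv : (2*H+1)*(S-1) = 2*(H*S)+S-2*H-1 := Gval hH hS
  have hkey : cc H S (2*(t)) + (2*H+1)*ww H S (2*(t)) + (2*(H*S)+S)
      = cc H S (2*(t)+1) + (2*H+1)*ww H S (2*(t)+1) + 1 * nn H S := by
    rw [hc1, hw1, hc2, hw2]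
    unfold nn
    zify [(show (t) ≤ 2*S+1 by omega), (show (t) ≤ S by omega), (show 1 ≤ S by omega), (show 1 ≤ 2*S by omega)]
    ring
  apply case_helper hH (2*(t)) (2*(t)+1) (2*(H*S)+S) (2*(H*S)+S) (Xstep (2*(t)) (2*(t)+1) (2*(H*S)+S) 1 hkey)
    (by omega) (by omega) (by omega) (by omega) ?_
  -- label inequality
  unfold LL
  rw [hm1, hm2]
  have hexp0 : 2*(2*S+1)*(0:ℕ) = 0 := by ring
  have hje : (2*(t)+1) = (2*(t)) + 1 := by omega
  have hmul : (2*(t)+1) * ((2*H+1)*(S-1)) = (2*(t)) * ((2*H+1)*(S-1)) + 1 * ((2*H+1)*(S-1)) := by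
    rw [hje, add_mul]
  omega

lemma caseA2 (hH : 1 ≤ H) (hS : 2 ≤ S) (t : ℕ) (ht : t+1 ≤ S) :
    LL H S (2*(t)+1) + (nn H S - 2*(2*H+1)) ≤ LL H S (2*(t+1)) +
      cycleDist (nn H S) ⟨XX H S (2*(t)+1), XX_lt _⟩ ⟨XX H S (2*(t+1)), XX_lt _⟩ := by
  obtain ⟨hc1, hw1, hm1⟩ := char0_odd (H := H) (S := S) (t) (by omega)
  obtain ⟨hc2, hw2, hm2⟩ := char0_even (H := H) (S := S) (t+1) (by omega)
  have hWa : 2*H ≤ H*S := by nlinarith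
  have hWb : S ≤ H*S := by nlinarith
  have h4 : nn H S = 4*(H*S)+2*H+2*S+1 := by unfold nn; ring
  have hGv : (2*H+1)*(S-1) = 2*(H*S)+S-2*H-1 := Gval hH hS
  have hkey : cc H S (2*(t)+1) + (2*H+1)*ww H S (2*(t)+1) + (2*(H*S)+S)
      = cc H S (2*(t+1)) + (2*H+1)*ww H S (2*(t+1)) + 0 * nn H S := by
    rw [hc1, hw1, hc2, hw2]
    unfold nn
    zify [(show (t) ≤ S by omega), (show (t+1) ≤ 2*S+1 by omega), (show 1 ≤ S by omega), (show 1 ≤ 2*S by omega)]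
    ring
  apply case_helper hH (2*(t)+1) (2*(t+1)) (2*(H*S)+S) (2*(H*S)+S) (Xstep (2*(t)+1) (2*(t+1)) (2*(H*S)+S) 0 hkey)
    (by omega) (by omega) (by omega) (by omega) ?_
  -- label inequality
  unfold LL
  rw [hm1, hm2]
  have hexp0 : 2*(2*S+1)*(0:ℕ) = 0 := by ring
  have hje : (2*(t+1)) = (2*(t)+1) + 1 := by omega
  have hmul : (2*(t+1)) * ((2*H+1)*(S-1)) = (2*(t)+1) * ((2*H+1)*(S-1)) + 1 * ((2*H+1)*(S-1)) := by
    rw [hje, add_mul]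
  omega

lemma caseA3a (hH : 1 ≤ H) (hS : 2 ≤ S)   :
    LL H S (2*(S)) + (nn H S - 2*(2*H+1)) ≤ LL H S (jo S (0) (0)) +
      cycleDist (nn H S) ⟨XX H S (2*(S)), XX_lt _⟩ ⟨XX H S (jo S (0) (0)), XX_lt _⟩ := by
  obtain ⟨hc1, hw1, hm1⟩ := char0_even (H := H) (S := S) (S) (by omega)
  obtain ⟨hc2, hw2, hm2⟩ := char_odd (H := H) (S := S) (0) (0) (by omega)
  have hWa : 2*H ≤ H*S := by nlinarith
  have hWb : S ≤ H*S := by nlinarith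
  have h4 : nn H S = 4*(H*S)+2*H+2*S+1 := by unfold nn; ring
  have hGv : (2*H+1)*(S-1) = 2*(H*S)+S-2*H-1 := Gval hH hS
  have hkey : cc H S (2*(S)) + (2*H+1)*ww H S (2*(S)) + (2*(H*S)+3*H+S+1)
      = cc H S (jo S (0) (0)) + (2*H+1)*ww H S (jo S (0) (0)) + 0 * nn H S := by
    rw [hc1, hw1, hc2, hw2]
    unfold nn
    zify [(show (S) ≤ 2*S+1 by omega), (show (0) ≤ H by omega), (show (0) ≤ 2*(0)+2*S+2 by omega), (show 1 ≤ S by omega), (show 1 ≤ 2*S by omega)]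
    ring
  apply case_helper hH (2*(S)) (jo S (0) (0)) (2*(H*S)+3*H+S+1) (2*(H*S)+S-H) (Xstep (2*(S)) (jo S (0) (0)) (2*(H*S)+3*H+S+1) 0 hkey)
    (by omega) (by omega) (by omega) (by omega) ?_
  -- label inequality
  unfold LL
  rw [hm1, hm2]
  have hexp0 : 2*(2*S+1)*(0:ℕ) = 0 := by ring
  have hje : (jo S (0) (0)) = (2*(S)) + 1 := by simp only [jo, je]; omega
  have hmul : (jo S (0) (0)) * ((2*H+1)*(S-1)) = (2*(S)) * ((2*H+1)*(S-1)) + 1 * ((2*H+1)*(S-1)) := by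
    rw [hje, add_mul]
  omega

lemma caseA3b (hH : 1 ≤ H) (hS : 2 ≤ S) (q : ℕ) (hq : q+2 ≤ H) :
    LL H S (je S (q) (2*S)) + (nn H S - 2*(2*H+1)) ≤ LL H S (jo S (q+1) (0)) +
      cycleDist (nn H S) ⟨XX H S (je S (q) (2*S)), XX_lt _⟩ ⟨XX H S (jo S (q+1) (0)), XX_lt _⟩ := by
  obtain ⟨hc1, hw1, hm1⟩ := char_even (H := H) (S := S) (q) (2*S) (by omega)
  obtain ⟨hc2, hw2, hm2⟩ := char_odd (H := H) (S := S) (q+1) (0) (by omega)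
  have hWa : 2*H ≤ H*S := by nlinarith
  have hWb : S ≤ H*S := by nlinarith
  have h4 : nn H S = 4*(H*S)+2*H+2*S+1 := by unfold nn; ring
  have hGv : (2*H+1)*(S-1) = 2*(H*S)+S-2*H-1 := Gval hH hS
  have hkey : cc H S (je S (q) (2*S)) + (2*H+1)*ww H S (je S (q) (2*S)) + (2*(H*S)+3*H+S+1)
      = cc H S (jo S (q+1) (0)) + (2*H+1)*ww H S (jo S (q+1) (0)) + 0 * nn H S := by
    rw [hc1, hw1, hc2, hw2]
    unfold nn
    zify [(show (q) ≤ 2*H by omega), (show (2*S) ≤ 3*S+2*(q)+2 by omega), (show (q+1) ≤ H by omega), (show (0) ≤ 2*(q+1)+2*S+2 by omega), (show 1 ≤ S by omega), (show 1 ≤ 2*S by omega)]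
    ring
  apply case_helper hH (je S (q) (2*S)) (jo S (q+1) (0)) (2*(H*S)+3*H+S+1) (2*(H*S)+S-H) (Xstep (je S (q) (2*S)) (jo S (q+1) (0)) (2*(H*S)+3*H+S+1) 0 hkey)
    (by omega) (by omega) (by omega) (by omega) ?_
  -- label inequality
  unfold LL
  rw [hm1, hm2]
  have hexp0 : 2*(2*S+1)*(0:ℕ) = 0 := by ring
  have hexp1 : 2*(2*S+1)*(q+1) = 2*(2*S+1)*q + 2*(2*S+1) := by ring
  have hje : (jo S (q+1) (0)) = (je S (q) (2*S)) + 1 := by simp only [jo, je]; omega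
  have hmul : (jo S (q+1) (0)) * ((2*H+1)*(S-1)) = (je S (q) (2*S)) * ((2*H+1)*(S-1)) + 1 * ((2*H+1)*(S-1)) := by
    rw [hje, add_mul]
  omega

lemma caseA4 (hH : 1 ≤ H) (hS : 2 ≤ S) (q u : ℕ) (hq : q+1 ≤ H) (hu : u+1 ≤ 2*S) :
    LL H S (je S (q) (u)) + (nn H S - 2*(2*H+1)) ≤ LL H S (jo S (q) (u+1)) +
      cycleDist (nn H S) ⟨XX H S (je S (q) (u)), XX_lt _⟩ ⟨XX H S (jo S (q) (u+1)), XX_lt _⟩ := by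
  obtain ⟨hc1, hw1, hm1⟩ := char_even (H := H) (S := S) (q) (u) (by omega)
  obtain ⟨hc2, hw2, hm2⟩ := char_odd (H := H) (S := S) (q) (u+1) (by omega)
  have hWa : 2*H ≤ H*S := by nlinarith
  have hWb : S ≤ H*S := by nlinarith
  have h4 : nn H S = 4*(H*S)+2*H+2*S+1 := by unfold nn; ring
  have hGv : (2*H+1)*(S-1) = 2*(H*S)+S-2*H-1 := Gval hH hS
  have hkey : cc H S (je S (q) (u)) + (2*H+1)*ww H S (je S (q) (u)) + (2*(H*S)+S-H)
      = cc H S (jo S (q) (u+1)) + (2*H+1)*ww H S (jo S (q) (u+1)) + 1 * nn H S := by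
    rw [hc1, hw1, hc2, hw2]
    unfold nn
    zify [(show (q) ≤ 2*H by omega), (show (u) ≤ 3*S+2*(q)+2 by omega), (show (q) ≤ H by omega), (show (u+1) ≤ 2*(q)+2*S+2 by omega), (show H ≤ 2*(H*S)+S by omega), (show 1 ≤ S by omega), (show 1 ≤ 2*S by omega)]
    ring
  apply case_helper hH (je S (q) (u)) (jo S (q) (u+1)) (2*(H*S)+S-H) (2*(H*S)+S-H) (Xstep (je S (q) (u)) (jo S (q) (u+1)) (2*(H*S)+S-H) 1 hkey)
    (by omega) (by omega) (by omega) (by omega) ?_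
  -- label inequality
  unfold LL
  rw [hm1, hm2]
  have hexp0 : 2*(2*S+1)*(0:ℕ) = 0 := by ring
  have hexp1 : 2*(2*S+1)*(q+1) = 2*(2*S+1)*q + 2*(2*S+1) := by ring
  have hje : (jo S (q) (u+1)) = (je S (q) (u)) + 1 := by simp only [jo, je]; omega
  have hmul : (jo S (q) (u+1)) * ((2*H+1)*(S-1)) = (je S (q) (u)) * ((2*H+1)*(S-1)) + 1 * ((2*H+1)*(S-1)) := by
    rw [hje, add_mul]
  omega

lemma caseA5 (hH : 1 ≤ H) (hS : 2 ≤ S) (q u : ℕ) (hq : q+1 ≤ H) (hu : u ≤ 2*S) :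
    LL H S (jo S (q) (u)) + (nn H S - 2*(2*H+1)) ≤ LL H S (je S (q) (u)) +
      cycleDist (nn H S) ⟨XX H S (jo S (q) (u)), XX_lt _⟩ ⟨XX H S (je S (q) (u)), XX_lt _⟩ := by
  obtain ⟨hc1, hw1, hm1⟩ := char_odd (H := H) (S := S) (q) (u) (by omega)
  obtain ⟨hc2, hw2, hm2⟩ := char_even (H := H) (S := S) (q) (u) (by omega)
  have hWa : 2*H ≤ H*S := by nlinarith
  have hWb : S ≤ H*S := by nlinarith
  have h4 : nn H S = 4*(H*S)+2*H+2*S+1 := by unfold nn; ring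
  have hGv : (2*H+1)*(S-1) = 2*(H*S)+S-2*H-1 := Gval hH hS
  have hkey : cc H S (jo S (q) (u)) + (2*H+1)*ww H S (jo S (q) (u)) + (2*(H*S)+H+S)
      = cc H S (je S (q) (u)) + (2*H+1)*ww H S (je S (q) (u)) + 0 * nn H S := by
    rw [hc1, hw1, hc2, hw2]
    unfold nn
    zify [(show (q) ≤ H by omega), (show (u) ≤ 2*(q)+2*S+2 by omega), (show (q) ≤ 2*H by omega), (show (u) ≤ 3*S+2*(q)+2 by omega), (show 1 ≤ S by omega), (show 1 ≤ 2*S by omega)]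
    ring
  apply case_helper hH (jo S (q) (u)) (je S (q) (u)) (2*(H*S)+H+S) (2*(H*S)+H+S) (Xstep (jo S (q) (u)) (je S (q) (u)) (2*(H*S)+H+S) 0 hkey)
    (by omega) (by omega) (by omega) (by omega) ?_
  -- label inequality
  unfold LL
  rw [hm1, hm2]
  have hexp0 : 2*(2*S+1)*(0:ℕ) = 0 := by ring
  have hexp1 : 2*(2*S+1)*(q+1) = 2*(2*S+1)*q + 2*(2*S+1) := by ring
  have hje : (je S (q) (u)) = (jo S (q) (u)) + 1 := by simp only [jo, je]; omega
  have hmul : (je S (q) (u)) * ((2*H+1)*(S-1)) = (jo S (q) (u)) * ((2*H+1)*(S-1)) + 1 * ((2*H+1)*(S-1)) := by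
    rw [hje, add_mul]
  omega

lemma caseB1a (hH : 1 ≤ H) (hS : 2 ≤ S) (t : ℕ) (ht : t+1 ≤ S) :
    LL H S (2*(t)) + (nn H S - 2*(2*H+1)) ≤ LL H S (2*(t+1)) +
      cycleDist (nn H S) ⟨XX H S (2*(t)), XX_lt _⟩ ⟨XX H S (2*(t+1)), XX_lt _⟩ := by
  obtain ⟨hc1, hw1, hm1⟩ := char0_even (H := H) (S := S) (t) (by omega)
  obtain ⟨hc2, hw2, hm2⟩ := char0_even (H := H) (S := S) (t+1) (by omega)
  have hWa : 2*H ≤ H*S := by nlinarith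
  have hWb : S ≤ H*S := by nlinarith
  have h4 : nn H S = 4*(H*S)+2*H+2*S+1 := by unfold nn; ring
  have hGv : (2*H+1)*(S-1) = 2*(H*S)+S-2*H-1 := Gval hH hS
  have hkey : cc H S (2*(t)) + (2*H+1)*ww H S (2*(t)) + (4*(H*S)+2*S)
      = cc H S (2*(t+1)) + (2*H+1)*ww H S (2*(t+1)) + 1 * nn H S := by
    rw [hc1, hw1, hc2, hw2]
    unfold nn
    zify [(show (t) ≤ 2*S+1 by omega), (show (t+1) ≤ 2*S+1 by omega), (show 1 ≤ S by omega), (show 1 ≤ 2*S by omega)]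
    ring
  apply case_helper hH (2*(t)) (2*(t+1)) (4*(H*S)+2*S) (2*H+1) (Xstep (2*(t)) (2*(t+1)) (4*(H*S)+2*S) 1 hkey)
    (by omega) (by omega) (by omega) (by omega) ?_
  -- label inequality
  unfold LL
  rw [hm1, hm2]
  have hexp0 : 2*(2*S+1)*(0:ℕ) = 0 := by ring
  have hje : (2*(t+1)) = (2*(t)) + 2 := by omega
  have hmul : (2*(t+1)) * ((2*H+1)*(S-1)) = (2*(t)) * ((2*H+1)*(S-1)) + 2 * ((2*H+1)*(S-1)) := by
    rw [hje, add_mul]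
  omega

lemma caseB1b (hH : 1 ≤ H) (hS : 2 ≤ S) (t : ℕ) (ht : t+2 ≤ S) :
    LL H S (2*(t)+1) + (nn H S - 2*(2*H+1)) ≤ LL H S (2*(t+1)+1) +
      cycleDist (nn H S) ⟨XX H S (2*(t)+1), XX_lt _⟩ ⟨XX H S (2*(t+1)+1), XX_lt _⟩ := by
  obtain ⟨hc1, hw1, hm1⟩ := char0_odd (H := H) (S := S) (t) (by omega)
  obtain ⟨hc2, hw2, hm2⟩ := char0_odd (H := H) (S := S) (t+1) (by omega)
  have hWa : 2*H ≤ H*S := by nlinarith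
  have hWb : S ≤ H*S := by nlinarith
  have h4 : nn H S = 4*(H*S)+2*H+2*S+1 := by unfold nn; ring
  have hGv : (2*H+1)*(S-1) = 2*(H*S)+S-2*H-1 := Gval hH hS
  have hkey : cc H S (2*(t)+1) + (2*H+1)*ww H S (2*(t)+1) + (4*(H*S)+2*S)
      = cc H S (2*(t+1)+1) + (2*H+1)*ww H S (2*(t+1)+1) + 1 * nn H S := by
    rw [hc1, hw1, hc2, hw2]
    unfold nn
    zify [(show (t) ≤ S by omega), (show (t+1) ≤ S by omega), (show 1 ≤ S by omega), (show 1 ≤ 2*S by omega)]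
    ring
  apply case_helper hH (2*(t)+1) (2*(t+1)+1) (4*(H*S)+2*S) (2*H+1) (Xstep (2*(t)+1) (2*(t+1)+1) (4*(H*S)+2*S) 1 hkey)
    (by omega) (by omega) (by omega) (by omega) ?_
  -- label inequality
  unfold LL
  rw [hm1, hm2]
  have hexp0 : 2*(2*S+1)*(0:ℕ) = 0 := by ring
  have hje : (2*(t+1)+1) = (2*(t)+1) + 2 := by omega
  have hmul : (2*(t+1)+1) * ((2*H+1)*(S-1)) = (2*(t)+1) * ((2*H+1)*(S-1)) + 2 * ((2*H+1)*(S-1)) := by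
    rw [hje, add_mul]
  omega

lemma caseB1c (hH : 1 ≤ H) (hS : 2 ≤ S) (q u : ℕ) (hq : q+1 ≤ H) (hu : u+1 ≤ 2*S) :
    LL H S (jo S (q) (u)) + (nn H S - 2*(2*H+1)) ≤ LL H S (jo S (q) (u+1)) +
      cycleDist (nn H S) ⟨XX H S (jo S (q) (u)), XX_lt _⟩ ⟨XX H S (jo S (q) (u+1)), XX_lt _⟩ := by
  obtain ⟨hc1, hw1, hm1⟩ := char_odd (H := H) (S := S) (q) (u) (by omega)
  obtain ⟨hc2, hw2, hm2⟩ := char_odd (H := H) (S := S) (q) (u+1) (by omega)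
  have hWa : 2*H ≤ H*S := by nlinarith
  have hWb : S ≤ H*S := by nlinarith
  have h4 : nn H S = 4*(H*S)+2*H+2*S+1 := by unfold nn; ring
  have hGv : (2*H+1)*(S-1) = 2*(H*S)+S-2*H-1 := Gval hH hS
  have hkey : cc H S (jo S (q) (u)) + (2*H+1)*ww H S (jo S (q) (u)) + (4*(H*S)+2*S)
      = cc H S (jo S (q) (u+1)) + (2*H+1)*ww H S (jo S (q) (u+1)) + 1 * nn H S := by
    rw [hc1, hw1, hc2, hw2]
    unfold nn
    zify [(show (q) ≤ H by omega), (show (u) ≤ 2*(q)+2*S+2 by omega), (show (q) ≤ H by omega), (show (u+1) ≤ 2*(q)+2*S+2 by omega), (show 1 ≤ S by omega), (show 1 ≤ 2*S by omega)]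
    ring
  apply case_helper hH (jo S (q) (u)) (jo S (q) (u+1)) (4*(H*S)+2*S) (2*H+1) (Xstep (jo S (q) (u)) (jo S (q) (u+1)) (4*(H*S)+2*S) 1 hkey)
    (by omega) (by omega) (by omega) (by omega) ?_
  -- label inequality
  unfold LL
  rw [hm1, hm2]
  have hexp0 : 2*(2*S+1)*(0:ℕ) = 0 := by ring
  have hexp1 : 2*(2*S+1)*(q+1) = 2*(2*S+1)*q + 2*(2*S+1) := by ring
  have hje : (jo S (q) (u+1)) = (jo S (q) (u)) + 2 := by simp only [jo, je]; omega
  have hmul : (jo S (q) (u+1)) * ((2*H+1)*(S-1)) = (jo S (q) (u)) * ((2*H+1)*(S-1)) + 2 * ((2*H+1)*(S-1)) := by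
    rw [hje, add_mul]
  omega

lemma caseB1d (hH : 1 ≤ H) (hS : 2 ≤ S) (q u : ℕ) (hq : q+1 ≤ H) (hu : u+1 ≤ 2*S) :
    LL H S (je S (q) (u)) + (nn H S - 2*(2*H+1)) ≤ LL H S (je S (q) (u+1)) +
      cycleDist (nn H S) ⟨XX H S (je S (q) (u)), XX_lt _⟩ ⟨XX H S (je S (q) (u+1)), XX_lt _⟩ := by
  obtain ⟨hc1, hw1, hm1⟩ := char_even (H := H) (S := S) (q) (u) (by omega)
  obtain ⟨hc2, hw2, hm2⟩ := char_even (H := H) (S := S) (q) (u+1) (by omega)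
  have hWa : 2*H ≤ H*S := by nlinarith
  have hWb : S ≤ H*S := by nlinarith
  have h4 : nn H S = 4*(H*S)+2*H+2*S+1 := by unfold nn; ring
  have hGv : (2*H+1)*(S-1) = 2*(H*S)+S-2*H-1 := Gval hH hS
  have hkey : cc H S (je S (q) (u)) + (2*H+1)*ww H S (je S (q) (u)) + (4*(H*S)+2*S)
      = cc H S (je S (q) (u+1)) + (2*H+1)*ww H S (je S (q) (u+1)) + 1 * nn H S := by
    rw [hc1, hw1, hc2, hw2]
    unfold nn
    zify [(show (q) ≤ 2*H by omega), (show (u) ≤ 3*S+2*(q)+2 by omega), (show (q) ≤ 2*H by omega), (show (u+1) ≤ 3*S+2*(q)+2 by omega), (show 1 ≤ S by omega), (show 1 ≤ 2*S by omega)]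
    ring
  apply case_helper hH (je S (q) (u)) (je S (q) (u+1)) (4*(H*S)+2*S) (2*H+1) (Xstep (je S (q) (u)) (je S (q) (u+1)) (4*(H*S)+2*S) 1 hkey)
    (by omega) (by omega) (by omega) (by omega) ?_
  -- label inequality
  unfold LL
  rw [hm1, hm2]
  have hexp0 : 2*(2*S+1)*(0:ℕ) = 0 := by ring
  have hexp1 : 2*(2*S+1)*(q+1) = 2*(2*S+1)*q + 2*(2*S+1) := by ring
  have hje : (je S (q) (u+1)) = (je S (q) (u)) + 2 := by simp only [jo, je]; omega
  have hmul : (je S (q) (u+1)) * ((2*H+1)*(S-1)) = (je S (q) (u)) * ((2*H+1)*(S-1)) + 2 * ((2*H+1)*(S-1)) := by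
    rw [hje, add_mul]
  omega

lemma caseB2 (hH : 1 ≤ H) (hS : 2 ≤ S)   :
    LL H S (2*(S)) + (nn H S - 2*(2*H+1)) ≤ LL H S (je S (0) (0)) +
      cycleDist (nn H S) ⟨XX H S (2*(S)), XX_lt _⟩ ⟨XX H S (je S (0) (0)), XX_lt _⟩ := by
  obtain ⟨hc1, hw1, hm1⟩ := char0_even (H := H) (S := S) (S) (by omega)
  obtain ⟨hc2, hw2, hm2⟩ := char_even (H := H) (S := S) (0) (0) (by omega)
  have hWa : 2*H ≤ H*S := by nlinarith
  have hWb : S ≤ H*S := by nlinarith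
  have h4 : nn H S = 4*(H*S)+2*H+2*S+1 := by unfold nn; ring
  have hGv : (2*H+1)*(S-1) = 2*(H*S)+S-2*H-1 := Gval hH hS
  have hkey : cc H S (2*(S)) + (2*H+1)*ww H S (2*(S)) + (2*H) + 1 * nn H S
      = cc H S (je S (0) (0)) + (2*H+1)*ww H S (je S (0) (0)) := by
    rw [hc1, hw1, hc2, hw2]
    unfold nn
    zify [(show (S) ≤ 2*S+1 by omega), (show (0) ≤ 2*H by omega), (show (0) ≤ 3*S+2*(0)+2 by omega), (show 1 ≤ S by omega), (show 1 ≤ 2*S by omega)]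
    ring
  apply case_helper hH (2*(S)) (je S (0) (0)) (2*H) (2*H) (Xstep' (2*(S)) (je S (0) (0)) (2*H) 1 hkey)
    (by omega) (by omega) (by omega) (by omega) ?_
  -- label inequality
  unfold LL
  rw [hm1, hm2]
  have hexp0 : 2*(2*S+1)*(0:ℕ) = 0 := by ring
  have hje : (je S (0) (0)) = (2*(S)) + 2 := by simp only [jo, je]; omega
  have hmul : (je S (0) (0)) * ((2*H+1)*(S-1)) = (2*(S)) * ((2*H+1)*(S-1)) + 2 * ((2*H+1)*(S-1)) := by
    rw [hje, add_mul]
  omega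

lemma caseB3 (hH : 1 ≤ H) (hS : 2 ≤ S)   :
    LL H S (2*(S-1)+1) + (nn H S - 2*(2*H+1)) ≤ LL H S (jo S (0) (0)) +
      cycleDist (nn H S) ⟨XX H S (2*(S-1)+1), XX_lt _⟩ ⟨XX H S (jo S (0) (0)), XX_lt _⟩ := by
  obtain ⟨hc1, hw1, hm1⟩ := char0_odd (H := H) (S := S) (S-1) (by omega)
  obtain ⟨hc2, hw2, hm2⟩ := char_odd (H := H) (S := S) (0) (0) (by omega)
  have hWa : 2*H ≤ H*S := by nlinarith
  have hWb : S ≤ H*S := by nlinarith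
  have h4 : nn H S = 4*(H*S)+2*H+2*S+1 := by unfold nn; ring
  have hGv : (2*H+1)*(S-1) = 2*(H*S)+S-2*H-1 := Gval hH hS
  have hkey : cc H S (2*(S-1)+1) + (2*H+1)*ww H S (2*(S-1)+1) + (H) + 1 * nn H S
      = cc H S (jo S (0) (0)) + (2*H+1)*ww H S (jo S (0) (0)) := by
    rw [hc1, hw1, hc2, hw2]
    unfold nn
    zify [(show (S-1) ≤ S by omega), (show (0) ≤ H by omega), (show (0) ≤ 2*(0)+2*S+2 by omega), (show 1 ≤ S by omega), (show 1 ≤ 2*S by omega)]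
    ring
  apply case_helper hH (2*(S-1)+1) (jo S (0) (0)) (H) (H) (Xstep' (2*(S-1)+1) (jo S (0) (0)) (H) 1 hkey)
    (by omega) (by omega) (by omega) (by omega) ?_
  -- label inequality
  unfold LL
  rw [hm1, hm2]
  have hexp0 : 2*(2*S+1)*(0:ℕ) = 0 := by ring
  have hje : (jo S (0) (0)) = (2*(S-1)+1) + 2 := by simp only [jo, je]; omega
  have hmul : (jo S (0) (0)) * ((2*H+1)*(S-1)) = (2*(S-1)+1) * ((2*H+1)*(S-1)) + 2 * ((2*H+1)*(S-1)) := by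
    rw [hje, add_mul]
  omega

lemma caseB4 (hH : 1 ≤ H) (hS : 2 ≤ S) (q : ℕ) (hq : q+2 ≤ H) :
    LL H S (je S (q) (2*S)) + (nn H S - 2*(2*H+1)) ≤ LL H S (je S (q+1) (0)) +
      cycleDist (nn H S) ⟨XX H S (je S (q) (2*S)), XX_lt _⟩ ⟨XX H S (je S (q+1) (0)), XX_lt _⟩ := by
  obtain ⟨hc1, hw1, hm1⟩ := char_even (H := H) (S := S) (q) (2*S) (by omega)
  obtain ⟨hc2, hw2, hm2⟩ := char_even (H := H) (S := S) (q+1) (0) (by omega)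
  have hWa : 2*H ≤ H*S := by nlinarith
  have hWb : S ≤ H*S := by nlinarith
  have h4 : nn H S = 4*(H*S)+2*H+2*S+1 := by unfold nn; ring
  have hGv : (2*H+1)*(S-1) = 2*(H*S)+S-2*H-1 := Gval hH hS
  have hkey : cc H S (je S (q) (2*S)) + (2*H+1)*ww H S (je S (q) (2*S)) + (2*H) + 1 * nn H S
      = cc H S (je S (q+1) (0)) + (2*H+1)*ww H S (je S (q+1) (0)) := by
    rw [hc1, hw1, hc2, hw2]
    unfold nn
    zify [(show (q) ≤ 2*H by omega), (show (2*S) ≤ 3*S+2*(q)+2 by omega), (show (q+1) ≤ 2*H by omega), (show (0) ≤ 3*S+2*(q+1)+2 by omega), (show 1 ≤ S by omega), (show 1 ≤ 2*S by omega)]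
    ring
  apply case_helper hH (je S (q) (2*S)) (je S (q+1) (0)) (2*H) (2*H) (Xstep' (je S (q) (2*S)) (je S (q+1) (0)) (2*H) 1 hkey)
    (by omega) (by omega) (by omega) (by omega) ?_
  -- label inequality
  unfold LL
  rw [hm1, hm2]
  have hexp0 : 2*(2*S+1)*(0:ℕ) = 0 := by ring
  have hexp1 : 2*(2*S+1)*(q+1) = 2*(2*S+1)*q + 2*(2*S+1) := by ring
  have hje : (je S (q+1) (0)) = (je S (q) (2*S)) + 2 := by simp only [jo, je]; omega
  have hmul : (je S (q+1) (0)) * ((2*H+1)*(S-1)) = (je S (q) (2*S)) * ((2*H+1)*(S-1)) + 2 * ((2*H+1)*(S-1)) := by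
    rw [hje, add_mul]
  omega

lemma caseB5 (hH : 1 ≤ H) (hS : 2 ≤ S) (q : ℕ) (hq : q+2 ≤ H) :
    LL H S (jo S (q) (2*S)) + (nn H S - 2*(2*H+1)) ≤ LL H S (jo S (q+1) (0)) +
      cycleDist (nn H S) ⟨XX H S (jo S (q) (2*S)), XX_lt _⟩ ⟨XX H S (jo S (q+1) (0)), XX_lt _⟩ := by
  obtain ⟨hc1, hw1, hm1⟩ := char_odd (H := H) (S := S) (q) (2*S) (by omega)
  obtain ⟨hc2, hw2, hm2⟩ := char_odd (H := H) (S := S) (q+1) (0) (by omega)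
  have hWa : 2*H ≤ H*S := by nlinarith
  have hWb : S ≤ H*S := by nlinarith
  have h4 : nn H S = 4*(H*S)+2*H+2*S+1 := by unfold nn; ring
  have hGv : (2*H+1)*(S-1) = 2*(H*S)+S-2*H-1 := Gval hH hS
  have hkey : cc H S (jo S (q) (2*S)) + (2*H+1)*ww H S (jo S (q) (2*S)) + (2*H) + 1 * nn H S
      = cc H S (jo S (q+1) (0)) + (2*H+1)*ww H S (jo S (q+1) (0)) := by
    rw [hc1, hw1, hc2, hw2]
    unfold nn
    zify [(show (q) ≤ H by omega), (show (2*S) ≤ 2*(q)+2*S+2 by omega), (show (q+1) ≤ H by omega), (show (0) ≤ 2*(q+1)+2*S+2 by omega), (show 1 ≤ S by omega), (show 1 ≤ 2*S by omega)]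
    ring
  apply case_helper hH (jo S (q) (2*S)) (jo S (q+1) (0)) (2*H) (2*H) (Xstep' (jo S (q) (2*S)) (jo S (q+1) (0)) (2*H) 1 hkey)
    (by omega) (by omega) (by omega) (by omega) ?_
  -- label inequality
  unfold LL
  rw [hm1, hm2]
  have hexp0 : 2*(2*S+1)*(0:ℕ) = 0 := by ring
  have hexp1 : 2*(2*S+1)*(q+1) = 2*(2*S+1)*q + 2*(2*S+1) := by ring
  have hje : (jo S (q+1) (0)) = (jo S (q) (2*S)) + 2 := by simp only [jo, je]; omega
  have hmul : (jo S (q+1) (0)) * ((2*H+1)*(S-1)) = (jo S (q) (2*S)) * ((2*H+1)*(S-1)) + 2 * ((2*H+1)*(S-1)) := by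
    rw [hje, add_mul]
  omega

lemma caseC1 (hH : 1 ≤ H) (hS : 2 ≤ S) (t : ℕ) (ht : t+2 ≤ S) :
    LL H S (2*(t)) + (nn H S - 2*(2*H+1)) ≤ LL H S (2*(t+1)+1) +
      cycleDist (nn H S) ⟨XX H S (2*(t)), XX_lt _⟩ ⟨XX H S (2*(t+1)+1), XX_lt _⟩ := by
  obtain ⟨hc1, hw1, hm1⟩ := char0_even (H := H) (S := S) (t) (by omega)
  obtain ⟨hc2, hw2, hm2⟩ := char0_odd (H := H) (S := S) (t+1) (by omega)
  have hWa : 2*H ≤ H*S := by nlinarith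
  have hWb : S ≤ H*S := by nlinarith
  have h4 : nn H S = 4*(H*S)+2*H+2*S+1 := by unfold nn; ring
  have hGv : (2*H+1)*(S-1) = 2*(H*S)+S-2*H-1 := Gval hH hS
  have hkey : cc H S (2*(t)) + (2*H+1)*ww H S (2*(t)) + (2*(H*S)+S-2*H-1)
      = cc H S (2*(t+1)+1) + (2*H+1)*ww H S (2*(t+1)+1) + 1 * nn H S := by
    rw [hc1, hw1, hc2, hw2]
    unfold nn
    zify [(show (t) ≤ 2*S+1 by omega), (show (t+1) ≤ S by omega), (show 2*H ≤ 2*(H*S)+S by omega), (show 1 ≤ 2*(H*S)+S-2*H by omega), (show 1 ≤ S by omega), (show 1 ≤ 2*S by omega)]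
    ring
  apply case_helper hH (2*(t)) (2*(t+1)+1) (2*(H*S)+S-2*H-1) (2*(H*S)+S-2*H-1) (Xstep (2*(t)) (2*(t+1)+1) (2*(H*S)+S-2*H-1) 1 hkey)
    (by omega) (by omega) (by omega) (by omega) ?_
  -- label inequality
  unfold LL
  rw [hm1, hm2]
  have hexp0 : 2*(2*S+1)*(0:ℕ) = 0 := by ring
  have hje : (2*(t+1)+1) = (2*(t)) + 3 := by omega
  have hmul : (2*(t+1)+1) * ((2*H+1)*(S-1)) = (2*(t)) * ((2*H+1)*(S-1)) + 3 * ((2*H+1)*(S-1)) := by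
    rw [hje, add_mul]
  omega

lemma caseC2 (hH : 1 ≤ H) (hS : 2 ≤ S) (t : ℕ) (ht : t+2 ≤ S) :
    LL H S (2*(t)+1) + (nn H S - 2*(2*H+1)) ≤ LL H S (2*(t+2)) +
      cycleDist (nn H S) ⟨XX H S (2*(t)+1), XX_lt _⟩ ⟨XX H S (2*(t+2)), XX_lt _⟩ := by
  obtain ⟨hc1, hw1, hm1⟩ := char0_odd (H := H) (S := S) (t) (by omega)
  obtain ⟨hc2, hw2, hm2⟩ := char0_even (H := H) (S := S) (t+2) (by omega)
  have hWa : 2*H ≤ H*S := by nlinarith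
  have hWb : S ≤ H*S := by nlinarith
  have h4 : nn H S = 4*(H*S)+2*H+2*S+1 := by unfold nn; ring
  have hGv : (2*H+1)*(S-1) = 2*(H*S)+S-2*H-1 := Gval hH hS
  have hkey : cc H S (2*(t)+1) + (2*H+1)*ww H S (2*(t)+1) + (2*(H*S)+S-2*H-1)
      = cc H S (2*(t+2)) + (2*H+1)*ww H S (2*(t+2)) + 0 * nn H S := by
    rw [hc1, hw1, hc2, hw2]
    unfold nn
    zify [(show (t) ≤ S by omega), (show (t+2) ≤ 2*S+1 by omega), (show 2*H ≤ 2*(H*S)+S by omega), (show 1 ≤ 2*(H*S)+S-2*H by omega), (show 1 ≤ S by omega), (show 1 ≤ 2*S by omega)]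
    ring
  apply case_helper hH (2*(t)+1) (2*(t+2)) (2*(H*S)+S-2*H-1) (2*(H*S)+S-2*H-1) (Xstep (2*(t)+1) (2*(t+2)) (2*(H*S)+S-2*H-1) 0 hkey)
    (by omega) (by omega) (by omega) (by omega) ?_
  -- label inequality
  unfold LL
  rw [hm1, hm2]
  have hexp0 : 2*(2*S+1)*(0:ℕ) = 0 := by ring
  have hje : (2*(t+2)) = (2*(t)+1) + 3 := by omega
  have hmul : (2*(t+2)) * ((2*H+1)*(S-1)) = (2*(t)+1) * ((2*H+1)*(S-1)) + 3 * ((2*H+1)*(S-1)) := by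
    rw [hje, add_mul]
  omega

lemma caseC3 (hH : 1 ≤ H) (hS : 2 ≤ S)   :
    LL H S (2*(S-1)) + (nn H S - 2*(2*H+1)) ≤ LL H S (jo S (0) (0)) +
      cycleDist (nn H S) ⟨XX H S (2*(S-1)), XX_lt _⟩ ⟨XX H S (jo S (0) (0)), XX_lt _⟩ := by
  obtain ⟨hc1, hw1, hm1⟩ := char0_even (H := H) (S := S) (S-1) (by omega)
  obtain ⟨hc2, hw2, hm2⟩ := char_odd (H := H) (S := S) (0) (0) (by omega)
  have hWa : 2*H ≤ H*S := by nlinarith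
  have hWb : S ≤ H*S := by nlinarith
  have h4 : nn H S = 4*(H*S)+2*H+2*S+1 := by unfold nn; ring
  have hGv : (2*H+1)*(S-1) = 2*(H*S)+S-2*H-1 := Gval hH hS
  have hkey : cc H S (2*(S-1)) + (2*H+1)*ww H S (2*(S-1)) + (2*(H*S)+H+S)
      = cc H S (jo S (0) (0)) + (2*H+1)*ww H S (jo S (0) (0)) + 0 * nn H S := by
    rw [hc1, hw1, hc2, hw2]
    unfold nn
    zify [(show (S-1) ≤ 2*S+1 by omega), (show (0) ≤ H by omega), (show (0) ≤ 2*(0)+2*S+2 by omega), (show 1 ≤ S by omega), (show 1 ≤ 2*S by omega)]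
    ring
  apply case_helper hH (2*(S-1)) (jo S (0) (0)) (2*(H*S)+H+S) (2*(H*S)+H+S) (Xstep (2*(S-1)) (jo S (0) (0)) (2*(H*S)+H+S) 0 hkey)
    (by omega) (by omega) (by omega) (by omega) ?_
  -- label inequality
  unfold LL
  rw [hm1, hm2]
  have hexp0 : 2*(2*S+1)*(0:ℕ) = 0 := by ring
  have hje : (jo S (0) (0)) = (2*(S-1)) + 3 := by simp only [jo, je]; omega
  have hmul : (jo S (0) (0)) * ((2*H+1)*(S-1)) = (2*(S-1)) * ((2*H+1)*(S-1)) + 3 * ((2*H+1)*(S-1)) := by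
    rw [hje, add_mul]
  omega

lemma caseC4 (hH : 1 ≤ H) (hS : 2 ≤ S)   :
    LL H S (2*(S)) + (nn H S - 2*(2*H+1)) ≤ LL H S (jo S (0) (1)) +
      cycleDist (nn H S) ⟨XX H S (2*(S)), XX_lt _⟩ ⟨XX H S (jo S (0) (1)), XX_lt _⟩ := by
  obtain ⟨hc1, hw1, hm1⟩ := char0_even (H := H) (S := S) (S) (by omega)
  obtain ⟨hc2, hw2, hm2⟩ := char_odd (H := H) (S := S) (0) (1) (by omega)
  have hWa : 2*H ≤ H*S := by nlinarith
  have hWb : S ≤ H*S := by nlinarith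
  have h4 : nn H S = 4*(H*S)+2*H+2*S+1 := by unfold nn; ring
  have hGv : (2*H+1)*(S-1) = 2*(H*S)+S-2*H-1 := Gval hH hS
  have hkey : cc H S (2*(S)) + (2*H+1)*ww H S (2*(S)) + (2*(H*S)+H+S)
      = cc H S (jo S (0) (1)) + (2*H+1)*ww H S (jo S (0) (1)) + 0 * nn H S := by
    rw [hc1, hw1, hc2, hw2]
    unfold nn
    zify [(show (S) ≤ 2*S+1 by omega), (show (0) ≤ H by omega), (show (1) ≤ 2*(0)+2*S+2 by omega), (show 1 ≤ S by omega), (show 1 ≤ 2*S by omega)]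
    ring
  apply case_helper hH (2*(S)) (jo S (0) (1)) (2*(H*S)+H+S) (2*(H*S)+H+S) (Xstep (2*(S)) (jo S (0) (1)) (2*(H*S)+H+S) 0 hkey)
    (by omega) (by omega) (by omega) (by omega) ?_
  -- label inequality
  unfold LL
  rw [hm1, hm2]
  have hexp0 : 2*(2*S+1)*(0:ℕ) = 0 := by ring
  have hje : (jo S (0) (1)) = (2*(S)) + 3 := by simp only [jo, je]; omega
  have hmul : (jo S (0) (1)) * ((2*H+1)*(S-1)) = (2*(S)) * ((2*H+1)*(S-1)) + 3 * ((2*H+1)*(S-1)) := by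
    rw [hje, add_mul]
  omega

lemma caseC5 (hH : 1 ≤ H) (hS : 2 ≤ S)   :
    LL H S (2*(S-1)+1) + (nn H S - 2*(2*H+1)) ≤ LL H S (je S (0) (0)) +
      cycleDist (nn H S) ⟨XX H S (2*(S-1)+1), XX_lt _⟩ ⟨XX H S (je S (0) (0)), XX_lt _⟩ := by
  obtain ⟨hc1, hw1, hm1⟩ := char0_odd (H := H) (S := S) (S-1) (by omega)
  obtain ⟨hc2, hw2, hm2⟩ := char_even (H := H) (S := S) (0) (0) (by omega)
  have hWa : 2*H ≤ H*S := by nlinarith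
  have hWb : S ≤ H*S := by nlinarith
  have h4 : nn H S = 4*(H*S)+2*H+2*S+1 := by unfold nn; ring
  have hGv : (2*H+1)*(S-1) = 2*(H*S)+S-2*H-1 := Gval hH hS
  have hkey : cc H S (2*(S-1)+1) + (2*H+1)*ww H S (2*(S-1)+1) + (2*(H*S)+2*H+S) + 1 * nn H S
      = cc H S (je S (0) (0)) + (2*H+1)*ww H S (je S (0) (0)) := by
    rw [hc1, hw1, hc2, hw2]
    unfold nn
    zify [(show (S-1) ≤ S by omega), (show (0) ≤ 2*H by omega), (show (0) ≤ 3*S+2*(0)+2 by omega), (show 1 ≤ S by omega), (show 1 ≤ 2*S by omega)]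
    ring
  apply case_helper hH (2*(S-1)+1) (je S (0) (0)) (2*(H*S)+2*H+S) (2*(H*S)+S+1) (Xstep' (2*(S-1)+1) (je S (0) (0)) (2*(H*S)+2*H+S) 1 hkey)
    (by omega) (by omega) (by omega) (by omega) ?_
  -- label inequality
  unfold LL
  rw [hm1, hm2]
  have hexp0 : 2*(2*S+1)*(0:ℕ) = 0 := by ring
  have hje : (je S (0) (0)) = (2*(S-1)+1) + 3 := by simp only [jo, je]; omega
  have hmul : (je S (0) (0)) * ((2*H+1)*(S-1)) = (2*(S-1)+1) * ((2*H+1)*(S-1)) + 3 * ((2*H+1)*(S-1)) := by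
    rw [hje, add_mul]
  omega

lemma caseC6 (hH : 1 ≤ H) (hS : 2 ≤ S) (q u : ℕ) (hq : q+1 ≤ H) (hu : u+2 ≤ 2*S) :
    LL H S (je S (q) (u)) + (nn H S - 2*(2*H+1)) ≤ LL H S (jo S (q) (u+2)) +
      cycleDist (nn H S) ⟨XX H S (je S (q) (u)), XX_lt _⟩ ⟨XX H S (jo S (q) (u+2)), XX_lt _⟩ := by
  obtain ⟨hc1, hw1, hm1⟩ := char_even (H := H) (S := S) (q) (u) (by omega)
  obtain ⟨hc2, hw2, hm2⟩ := char_odd (H := H) (S := S) (q) (u+2) (by omega)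
  have hWa : 2*H ≤ H*S := by nlinarith
  have hWb : S ≤ H*S := by nlinarith
  have h4 : nn H S = 4*(H*S)+2*H+2*S+1 := by unfold nn; ring
  have hGv : (2*H+1)*(S-1) = 2*(H*S)+S-2*H-1 := Gval hH hS
  have hkey : cc H S (je S (q) (u)) + (2*H+1)*ww H S (je S (q) (u)) + (2*(H*S)+S-3*H-1)
      = cc H S (jo S (q) (u+2)) + (2*H+1)*ww H S (jo S (q) (u+2)) + 1 * nn H S := by
    rw [hc1, hw1, hc2, hw2]
    unfold nn
    zify [(show (q) ≤ 2*H by omega), (show (u) ≤ 3*S+2*(q)+2 by omega), (show (q) ≤ H by omega), (show (u+2) ≤ 2*(q)+2*S+2 by omega), (show 3*H ≤ 2*(H*S)+S by omega), (show 1 ≤ 2*(H*S)+S-3*H by omega), (show 1 ≤ S by omega), (show 1 ≤ 2*S by omega)]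
    ring
  apply case_helper hH (je S (q) (u)) (jo S (q) (u+2)) (2*(H*S)+S-3*H-1) (2*(H*S)+S-3*H-1) (Xstep (je S (q) (u)) (jo S (q) (u+2)) (2*(H*S)+S-3*H-1) 1 hkey)
    (by omega) (by omega) (by omega) (by omega) ?_
  -- label inequality
  unfold LL
  rw [hm1, hm2]
  have hexp0 : 2*(2*S+1)*(0:ℕ) = 0 := by ring
  have hexp1 : 2*(2*S+1)*(q+1) = 2*(2*S+1)*q + 2*(2*S+1) := by ring
  have hje : (jo S (q) (u+2)) = (je S (q) (u)) + 3 := by simp only [jo, je]; omega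
  have hmul : (jo S (q) (u+2)) * ((2*H+1)*(S-1)) = (je S (q) (u)) * ((2*H+1)*(S-1)) + 3 * ((2*H+1)*(S-1)) := by
    rw [hje, add_mul]
  omega

lemma caseC7a (hH : 1 ≤ H) (hS : 2 ≤ S) (q : ℕ) (hq : q+2 ≤ H) :
    LL H S (je S (q) (2*S-1)) + (nn H S - 2*(2*H+1)) ≤ LL H S (jo S (q+1) (0)) +
      cycleDist (nn H S) ⟨XX H S (je S (q) (2*S-1)), XX_lt _⟩ ⟨XX H S (jo S (q+1) (0)), XX_lt _⟩ := by
  obtain ⟨hc1, hw1, hm1⟩ := char_even (H := H) (S := S) (q) (2*S-1) (by omega)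
  obtain ⟨hc2, hw2, hm2⟩ := char_odd (H := H) (S := S) (q+1) (0) (by omega)
  have hWa : 2*H ≤ H*S := by nlinarith
  have hWb : S ≤ H*S := by nlinarith
  have h4 : nn H S = 4*(H*S)+2*H+2*S+1 := by unfold nn; ring
  have hGv : (2*H+1)*(S-1) = 2*(H*S)+S-2*H-1 := Gval hH hS
  have hkey : cc H S (je S (q) (2*S-1)) + (2*H+1)*ww H S (je S (q) (2*S-1)) + (2*(H*S)+H+S)
      = cc H S (jo S (q+1) (0)) + (2*H+1)*ww H S (jo S (q+1) (0)) + 0 * nn H S := by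
    rw [hc1, hw1, hc2, hw2]
    unfold nn
    zify [(show (q) ≤ 2*H by omega), (show (2*S-1) ≤ 3*S+2*(q)+2 by omega), (show (q+1) ≤ H by omega), (show (0) ≤ 2*(q+1)+2*S+2 by omega), (show 1 ≤ S by omega), (show 1 ≤ 2*S by omega)]
    ring
  apply case_helper hH (je S (q) (2*S-1)) (jo S (q+1) (0)) (2*(H*S)+H+S) (2*(H*S)+H+S) (Xstep (je S (q) (2*S-1)) (jo S (q+1) (0)) (2*(H*S)+H+S) 0 hkey)
    (by omega) (by omega) (by omega) (by omega) ?_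
  -- label inequality
  unfold LL
  rw [hm1, hm2]
  have hexp0 : 2*(2*S+1)*(0:ℕ) = 0 := by ring
  have hexp1 : 2*(2*S+1)*(q+1) = 2*(2*S+1)*q + 2*(2*S+1) := by ring
  have hje : (jo S (q+1) (0)) = (je S (q) (2*S-1)) + 3 := by simp only [jo, je]; omega
  have hmul : (jo S (q+1) (0)) * ((2*H+1)*(S-1)) = (je S (q) (2*S-1)) * ((2*H+1)*(S-1)) + 3 * ((2*H+1)*(S-1)) := by
    rw [hje, add_mul]
  omega

lemma caseC7b (hH : 1 ≤ H) (hS : 2 ≤ S) (q : ℕ) (hq : q+2 ≤ H) :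
    LL H S (je S (q) (2*S)) + (nn H S - 2*(2*H+1)) ≤ LL H S (jo S (q+1) (1)) +
      cycleDist (nn H S) ⟨XX H S (je S (q) (2*S)), XX_lt _⟩ ⟨XX H S (jo S (q+1) (1)), XX_lt _⟩ := by
  obtain ⟨hc1, hw1, hm1⟩ := char_even (H := H) (S := S) (q) (2*S) (by omega)
  obtain ⟨hc2, hw2, hm2⟩ := char_odd (H := H) (S := S) (q+1) (1) (by omega)
  have hWa : 2*H ≤ H*S := by nlinarith
  have hWb : S ≤ H*S := by nlinarith
  have h4 : nn H S = 4*(H*S)+2*H+2*S+1 := by unfold nn; ring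
  have hGv : (2*H+1)*(S-1) = 2*(H*S)+S-2*H-1 := Gval hH hS
  have hkey : cc H S (je S (q) (2*S)) + (2*H+1)*ww H S (je S (q) (2*S)) + (2*(H*S)+H+S)
      = cc H S (jo S (q+1) (1)) + (2*H+1)*ww H S (jo S (q+1) (1)) + 0 * nn H S := by
    rw [hc1, hw1, hc2, hw2]
    unfold nn
    zify [(show (q) ≤ 2*H by omega), (show (2*S) ≤ 3*S+2*(q)+2 by omega), (show (q+1) ≤ H by omega), (show (1) ≤ 2*(q+1)+2*S+2 by omega), (show 1 ≤ S by omega), (show 1 ≤ 2*S by omega)]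
    ring
  apply case_helper hH (je S (q) (2*S)) (jo S (q+1) (1)) (2*(H*S)+H+S) (2*(H*S)+H+S) (Xstep (je S (q) (2*S)) (jo S (q+1) (1)) (2*(H*S)+H+S) 0 hkey)
    (by omega) (by omega) (by omega) (by omega) ?_
  -- label inequality
  unfold LL
  rw [hm1, hm2]
  have hexp0 : 2*(2*S+1)*(0:ℕ) = 0 := by ring
  have hexp1 : 2*(2*S+1)*(q+1) = 2*(2*S+1)*q + 2*(2*S+1) := by ring
  have hje : (jo S (q+1) (1)) = (je S (q) (2*S)) + 3 := by simp only [jo, je]; omega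
  have hmul : (jo S (q+1) (1)) * ((2*H+1)*(S-1)) = (je S (q) (2*S)) * ((2*H+1)*(S-1)) + 3 * ((2*H+1)*(S-1)) := by
    rw [hje, add_mul]
  omega

lemma caseC8 (hH : 1 ≤ H) (hS : 2 ≤ S) (q u : ℕ) (hq : q+1 ≤ H) (hu : u+1 ≤ 2*S) :
    LL H S (jo S (q) (u)) + (nn H S - 2*(2*H+1)) ≤ LL H S (je S (q) (u+1)) +
      cycleDist (nn H S) ⟨XX H S (jo S (q) (u)), XX_lt _⟩ ⟨XX H S (je S (q) (u+1)), XX_lt _⟩ := by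
  obtain ⟨hc1, hw1, hm1⟩ := char_odd (H := H) (S := S) (q) (u) (by omega)
  obtain ⟨hc2, hw2, hm2⟩ := char_even (H := H) (S := S) (q) (u+1) (by omega)
  have hWa : 2*H ≤ H*S := by nlinarith
  have hWb : S ≤ H*S := by nlinarith
  have h4 : nn H S = 4*(H*S)+2*H+2*S+1 := by unfold nn; ring
  have hGv : (2*H+1)*(S-1) = 2*(H*S)+S-2*H-1 := Gval hH hS
  have hkey : cc H S (jo S (q) (u)) + (2*H+1)*ww H S (jo S (q) (u)) + (2*(H*S)+S-H-1)
      = cc H S (je S (q) (u+1)) + (2*H+1)*ww H S (je S (q) (u+1)) + 0 * nn H S := by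
    rw [hc1, hw1, hc2, hw2]
    unfold nn
    zify [(show (q) ≤ H by omega), (show (u) ≤ 2*(q)+2*S+2 by omega), (show (q) ≤ 2*H by omega), (show (u+1) ≤ 3*S+2*(q)+2 by omega), (show H ≤ 2*(H*S)+S by omega), (show 1 ≤ 2*(H*S)+S-H by omega), (show 1 ≤ S by omega), (show 1 ≤ 2*S by omega)]
    ring
  apply case_helper hH (jo S (q) (u)) (je S (q) (u+1)) (2*(H*S)+S-H-1) (2*(H*S)+S-H-1) (Xstep (jo S (q) (u)) (je S (q) (u+1)) (2*(H*S)+S-H-1) 0 hkey)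
    (by omega) (by omega) (by omega) (by omega) ?_
  -- label inequality
  unfold LL
  rw [hm1, hm2]
  have hexp0 : 2*(2*S+1)*(0:ℕ) = 0 := by ring
  have hexp1 : 2*(2*S+1)*(q+1) = 2*(2*S+1)*q + 2*(2*S+1) := by ring
  have hje : (je S (q) (u+1)) = (jo S (q) (u)) + 3 := by simp only [jo, je]; omega
  have hmul : (je S (q) (u+1)) * ((2*H+1)*(S-1)) = (jo S (q) (u)) * ((2*H+1)*(S-1)) + 3 * ((2*H+1)*(S-1)) := by
    rw [hje, add_mul]
  omega

lemma caseC9 (hH : 1 ≤ H) (hS : 2 ≤ S) (q : ℕ) (hq : q+2 ≤ H) :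
    LL H S (jo S (q) (2*S)) + (nn H S - 2*(2*H+1)) ≤ LL H S (je S (q+1) (0)) +
      cycleDist (nn H S) ⟨XX H S (jo S (q) (2*S)), XX_lt _⟩ ⟨XX H S (je S (q+1) (0)), XX_lt _⟩ := by
  obtain ⟨hc1, hw1, hm1⟩ := char_odd (H := H) (S := S) (q) (2*S) (by omega)
  obtain ⟨hc2, hw2, hm2⟩ := char_even (H := H) (S := S) (q+1) (0) (by omega)
  have hWa : 2*H ≤ H*S := by nlinarith
  have hWb : S ≤ H*S := by nlinarith
  have h4 : nn H S = 4*(H*S)+2*H+2*S+1 := by unfold nn; ring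
  have hGv : (2*H+1)*(S-1) = 2*(H*S)+S-2*H-1 := Gval hH hS
  have hkey : cc H S (jo S (q) (2*S)) + (2*H+1)*ww H S (jo S (q) (2*S)) + (2*(H*S)+3*H+S) + 1 * nn H S
      = cc H S (je S (q+1) (0)) + (2*H+1)*ww H S (je S (q+1) (0)) := by
    rw [hc1, hw1, hc2, hw2]
    unfold nn
    zify [(show (q) ≤ H by omega), (show (2*S) ≤ 2*(q)+2*S+2 by omega), (show (q+1) ≤ 2*H by omega), (show (0) ≤ 3*S+2*(q+1)+2 by omega), (show 1 ≤ S by omega), (show 1 ≤ 2*S by omega)]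
    ring
  apply case_helper hH (jo S (q) (2*S)) (je S (q+1) (0)) (2*(H*S)+3*H+S) (2*(H*S)+S+1-H) (Xstep' (jo S (q) (2*S)) (je S (q+1) (0)) (2*(H*S)+3*H+S) 1 hkey)
    (by omega) (by omega) (by omega) (by omega) ?_
  -- label inequality
  unfold LL
  rw [hm1, hm2]
  have hexp0 : 2*(2*S+1)*(0:ℕ) = 0 := by ring
  have hexp1 : 2*(2*S+1)*(q+1) = 2*(2*S+1)*q + 2*(2*S+1) := by ring
  have hje : (je S (q+1) (0)) = (jo S (q) (2*S)) + 3 := by simp only [jo, je]; omega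
  have hmul : (je S (q+1) (0)) * ((2*H+1)*(S-1)) = (jo S (q) (2*S)) * ((2*H+1)*(S-1)) + 3 * ((2*H+1)*(S-1)) := by
    rw [hje, add_mul]
  omega

/-! Dispatchers -/

lemma chk1 (hH : 1 ≤ H) (hS : 2 ≤ S) (j : ℕ) (hj : j + 1 ≤ nn H S - 1) :
    LL H S j + (nn H S - 2*(2*H+1)) ≤ LL H S (j+1) +
      cycleDist (nn H S) ⟨XX H S j, XX_lt j⟩ ⟨XX H S (j+1), XX_lt _⟩ := by
  have h4 : nn H S = 4*(H*S)+2*H+2*S+1 := by unfold nn; ring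
  have hWa : 2*H ≤ H*S := by nlinarith
  rcases classify (H := H) (S := S) j (by omega) with ⟨t, ht, rfl⟩ | ⟨t, ht, rfl⟩ |
    ⟨q, u, hq, hu, rfl⟩ | ⟨q, u, hq, hu, rfl⟩
  · by_cases ht2 : t = S
    · rw [ht2]
      rw [show 2*S+1 = jo S 0 0 from by unfold jo; ring]
      exact caseA3a hH hS
    · exact caseA1 hH hS t (by omega)
  · rw [show 2*t+1+1 = 2*(t+1) from by ring]
    exact caseA2 hH hS t ht
  · rw [show jo S q u + 1 = je S q u from by simp only [jo, je]; omega]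
    exact caseA5 hH hS q u hq hu
  · by_cases hu2 : u = 2*S
    · subst hu2
      by_cases hq2 : q+2 ≤ H
      · rw [show je S q (2*S) + 1 = jo S (q+1) 0 from by
          simp only [jo, je]
          have hexp1 : 2*(2*S+1)*(q+1) = 2*(2*S+1)*q + 2*(2*S+1) := by ring
          omega]
        exact caseA3b hH hS q hq2
      · exfalso
        have hq3 : H = q+1 := by omega
        subst hq3
        have hlast : nn (q+1) S = je S q (2*S) + 1 := by unfold nn je; ring
        omega
    · rw [show je S q u + 1 = jo S q (u+1) from by simp only [jo, je]; omega]
      exact caseA4 hH hS q u hq (by omega)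

lemma chk2 (hH : 1 ≤ H) (hS : 2 ≤ S) (j : ℕ) (hj : j + 2 ≤ nn H S - 1) :
    LL H S j + (nn H S - 2*(2*H+1)) ≤ LL H S (j+2) +
      cycleDist (nn H S) ⟨XX H S j, XX_lt j⟩ ⟨XX H S (j+2), XX_lt _⟩ := by
  have h4 : nn H S = 4*(H*S)+2*H+2*S+1 := by unfold nn; ring
  have hWa : 2*H ≤ H*S := by nlinarith
  rcases classify (H := H) (S := S) j (by omega) with ⟨t, ht, rfl⟩ | ⟨t, ht, rfl⟩ |
    ⟨q, u, hq, hu, rfl⟩ | ⟨q, u, hq, hu, rfl⟩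
  · by_cases ht2 : t = S
    · rw [ht2]
      rw [show 2*S+2 = je S 0 0 from by unfold je; ring]
      exact caseB2 hH hS
    · rw [show 2*t+2 = 2*(t+1) from by ring]
      exact caseB1a hH hS t (by omega)
  · by_cases ht2 : t + 1 = S
    · rw [show 2*t+1+2 = jo S 0 0 from by unfold jo; omega]
      rw [show 2*t+1 = 2*(S-1)+1 from by omega]
      exact caseB3 hH hS
    · rw [show 2*t+1+2 = 2*(t+1)+1 from by ring]
      exact caseB1b hH hS t (by omega)
  · by_cases hu2 : u = 2*S
    · subst hu2
      by_cases hq2 : q+2 ≤ H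
      · rw [show jo S q (2*S) + 2 = jo S (q+1) 0 from by
          simp only [jo, je]
          have hexp1 : 2*(2*S+1)*(q+1) = 2*(2*S+1)*q + 2*(2*S+1) := by ring
          omega]
        exact caseB5 hH hS q hq2
      · exfalso
        have hq3 : H = q+1 := by omega
        subst hq3
        have hlast : nn (q+1) S = jo S q (2*S) + 2 := by unfold nn jo; ring
        omega
    · rw [show jo S q u + 2 = jo S q (u+1) from by simp only [jo]; omega]
      exact caseB1c hH hS q u hq (by omega)
  · by_cases hu2 : u = 2*S
    · subst hu2
      by_cases hq2 : q+2 ≤ H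
      · rw [show je S q (2*S) + 2 = je S (q+1) 0 from by
          simp only [je]
          have hexp1 : 2*(2*S+1)*(q+1) = 2*(2*S+1)*q + 2*(2*S+1) := by ring
          omega]
        exact caseB4 hH hS q hq2
      · exfalso
        have hq3 : H = q+1 := by omega
        subst hq3
        have hlast : nn (q+1) S = je S q (2*S) + 1 := by unfold nn je; ring
        omega
    · rw [show je S q u + 2 = je S q (u+1) from by simp only [je]; omega]
      exact caseB1d hH hS q u hq (by omega)

lemma chk3 (hH : 1 ≤ H) (hS : 2 ≤ S) (j : ℕ) (hj : j + 3 ≤ nn H S - 1) :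
    LL H S j + (nn H S - 2*(2*H+1)) ≤ LL H S (j+3) +
      cycleDist (nn H S) ⟨XX H S j, XX_lt j⟩ ⟨XX H S (j+3), XX_lt _⟩ := by
  have h4 : nn H S = 4*(H*S)+2*H+2*S+1 := by unfold nn; ring
  have hWa : 2*H ≤ H*S := by nlinarith
  rcases classify (H := H) (S := S) j (by omega) with ⟨t, ht, rfl⟩ | ⟨t, ht, rfl⟩ |
    ⟨q, u, hq, hu, rfl⟩ | ⟨q, u, hq, hu, rfl⟩
  · by_cases ht2 : t = S
    · rw [ht2]
      rw [show 2*S+3 = jo S 0 1 from by unfold jo; ring]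
      exact caseC4 hH hS
    · by_cases ht3 : t + 1 = S
      · rw [show 2*t+3 = jo S 0 0 from by unfold jo; omega]
        rw [show 2*t = 2*(S-1) from by omega]
        exact caseC3 hH hS
      · rw [show 2*t+3 = 2*(t+1)+1 from by ring]
        exact caseC1 hH hS t (by omega)
  · by_cases ht2 : t + 1 = S
    · rw [show 2*t+1+3 = je S 0 0 from by unfold je; omega]
      rw [show 2*t+1 = 2*(S-1)+1 from by omega]
      exact caseC5 hH hS
    · rw [show 2*t+1+3 = 2*(t+2) from by ring]
      exact caseC2 hH hS t (by omega)
  · by_cases hu2 : u = 2*S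
    · subst hu2
      by_cases hq2 : q+2 ≤ H
      · rw [show jo S q (2*S) + 3 = je S (q+1) 0 from by
          simp only [jo, je]
          have hexp1 : 2*(2*S+1)*(q+1) = 2*(2*S+1)*q + 2*(2*S+1) := by ring
          omega]
        exact caseC9 hH hS q hq2
      · exfalso
        have hq3 : H = q+1 := by omega
        subst hq3
        have hlast : nn (q+1) S = jo S q (2*S) + 2 := by unfold nn jo; ring
        omega
    · rw [show jo S q u + 3 = je S q (u+1) from by simp only [jo, je]; omega]
      exact caseC8 hH hS q u hq (by omega)
  · by_cases hu2 : u = 2*S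
    · subst hu2
      by_cases hq2 : q+2 ≤ H
      · rw [show je S q (2*S) + 3 = jo S (q+1) 1 from by
          simp only [jo, je]
          have hexp1 : 2*(2*S+1)*(q+1) = 2*(2*S+1)*q + 2*(2*S+1) := by ring
          omega]
        exact caseC7b hH hS q hq2
      · exfalso
        have hq3 : H = q+1 := by omega
        subst hq3
        have hlast : nn (q+1) S = je S q (2*S) + 1 := by unfold nn je; ring
        omega
    · by_cases hu3 : u + 1 = 2*S
      · by_cases hq2 : q+2 ≤ H
        · rw [show je S q u + 3 = jo S (q+1) 0 from by
            simp only [jo, je]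
            have hexp1 : 2*(2*S+1)*(q+1) = 2*(2*S+1)*q + 2*(2*S+1) := by ring
            omega]
          rw [show je S q u = je S q (2*S-1) from by simp only [je]; omega]
          exact caseC7a hH hS q hq2
        · exfalso
          have hq3 : H = q+1 := by omega
          subst hq3
          have hlast : nn (q+1) S = je S q u + 3 := by
            unfold nn je
            have hu4 : u = 2*S-1 := by omega
            subst hu4
            have hexp1 : (2*(q+1)+1)*(2*S+1) = 2*(2*S+1)*q + (4*S+2) + (2*S+1) := by ring
            omega
          omega
      · rw [show je S q u + 3 = jo S q (u+2) from by simp only [jo, je]; omega]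
        exact caseC6 hH hS q u hq (by omega)

/-! label function facts -/

lemma corr_le (hH : 1 ≤ H) (hS : 2 ≤ S) (j : ℕ) (hj : j ≤ nn H S - 1) :
    corr H S j ≤ 2*H := by
  rcases classify (H := H) (S := S) j hj with ⟨t, ht, rfl⟩ | ⟨t, ht, rfl⟩ |
    ⟨q, u, hq, hu, rfl⟩ | ⟨q, u, hq, hu, rfl⟩
  · rw [(char0_even (H := H) (S := S) t ht).2.2]; omega
  · rw [(char0_odd (H := H) (S := S) t ht).2.2]; omega
  · rw [(char_odd (H := H) (S := S) q u hu).2.2]; omega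
  · rw [(char_even (H := H) (S := S) q u hu).2.2]; omega

lemma Lstep (hH : 1 ≤ H) (hS : 2 ≤ S) (j : ℕ) (hj : j + 1 ≤ nn H S - 1) :
    LL H S j + 1 ≤ LL H S (j+1) := by
  have h1 := corr_le hH hS j (by omega)
  unfold LL
  have hmul : (j+1)*((2*H+1)*(S-1)) = j*((2*H+1)*(S-1)) + (2*H+1)*(S-1) := by ring
  have hG : 2*H+1 ≤ (2*H+1)*(S-1) := by
    have h2 := Nat.mul_le_mul_left (2*H+1) (show 1 ≤ S-1 by omega)
    omega
  omega

lemma LL_mono (hH : 1 ≤ H) (hS : 2 ≤ S) : ∀ a b : ℕ, a ≤ b → b ≤ nn H S - 1 →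
    LL H S a ≤ LL H S b := by
  intro a b
  induction b with
  | zero =>
    intro h _
    have ha : a = 0 := by omega
    subst ha
    exact le_refl _
  | succ b ih =>
    intro hab hb
    rcases Nat.eq_or_lt_of_le hab with rfl | hlt
    · exact le_refl _
    · have h1 := ih (by omega) (by omega)
      have h2 := Lstep hH hS b (by omega)
      omega

lemma corr_pair (hH : 1 ≤ H) (hS : 2 ≤ S) (j : ℕ) (hj : j + 2 ≤ nn H S - 1) :
    corr H S j ≤ corr H S (j+2) := by
  have h4 : nn H S = 4*(H*S)+2*H+2*S+1 := by unfold nn; ring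
  have hWa : 2*H ≤ H*S := by nlinarith
  rcases classify (H := H) (S := S) j (by omega) with ⟨t, ht, rfl⟩ | ⟨t, ht, rfl⟩ |
    ⟨q, u, hq, hu, rfl⟩ | ⟨q, u, hq, hu, rfl⟩
  · by_cases ht2 : t = S
    · rw [ht2]
      rw [show 2*S+2 = je S 0 0 from by unfold je; ring,
        (char0_even (H := H) (S := S) S (le_refl S)).2.2,
        (char_even (H := H) (S := S) 0 0 (by omega)).2.2]
      all_goals omega
    · rw [show 2*t+2 = 2*(t+1) from by ring,
        (char0_even (H := H) (S := S) t (by omega)).2.2,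
        (char0_even (H := H) (S := S) (t+1) (by omega)).2.2]
      all_goals omega
  · by_cases ht2 : t + 1 = S
    · rw [show 2*t+1+2 = jo S 0 0 from by unfold jo; omega,
        (char0_odd (H := H) (S := S) t (by omega)).2.2,
        (char_odd (H := H) (S := S) 0 0 (by omega)).2.2]
      all_goals omega
    · rw [show 2*t+1+2 = 2*(t+1)+1 from by ring,
        (char0_odd (H := H) (S := S) t (by omega)).2.2,
        (char0_odd (H := H) (S := S) (t+1) (by omega)).2.2]
      all_goals omega
  · by_cases hu2 : u = 2*S
    · subst hu2
      have hq2 : q+2 ≤ H := by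
        by_contra hcon
        have hq3 : H = q+1 := by omega
        subst hq3
        have hlast : nn (q+1) S = jo S q (2*S) + 2 := by unfold nn jo; ring
        omega
      rw [show jo S q (2*S) + 2 = jo S (q+1) 0 from by
          simp only [jo]
          have hexp1 : 2*(2*S+1)*(q+1) = 2*(2*S+1)*q + 2*(2*S+1) := by ring
          omega,
        (char_odd (H := H) (S := S) q (2*S) (by omega)).2.2,
        (char_odd (H := H) (S := S) (q+1) 0 (by omega)).2.2]
      all_goals omega
    · rw [show jo S q u + 2 = jo S q (u+1) from by simp only [jo]; omega,
        (char_odd (H := H) (S := S) q u hu).2.2,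
        (char_odd (H := H) (S := S) q (u+1) (by omega)).2.2]
      all_goals omega
  · by_cases hu2 : u = 2*S
    · subst hu2
      have hq2 : q+2 ≤ H := by
        by_contra hcon
        have hq3 : H = q+1 := by omega
        subst hq3
        have hlast : nn (q+1) S = je S q (2*S) + 1 := by unfold nn je; ring
        omega
      rw [show je S q (2*S) + 2 = je S (q+1) 0 from by
          simp only [je]
          have hexp1 : 2*(2*S+1)*(q+1) = 2*(2*S+1)*q + 2*(2*S+1) := by ring
          omega,
        (char_even (H := H) (S := S) q (2*S) (by omega)).2.2,
        (char_even (H := H) (S := S) (q+1) 0 (by omega)).2.2]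
      all_goals omega
    · rw [show je S q u + 2 = je S q (u+1) from by simp only [je]; omega,
        (char_even (H := H) (S := S) q u hu).2.2,
        (char_even (H := H) (S := S) q (u+1) (by omega)).2.2]
      all_goals omega

lemma L2step (hH : 1 ≤ H) (hS : 2 ≤ S) (j : ℕ) (hj : j + 2 ≤ nn H S - 1) :
    LL H S j + 2*((2*H+1)*(S-1)) ≤ LL H S (j+2) := by
  have hc := corr_pair hH hS j hj
  unfold LL
  have hmul : (j+2)*((2*H+1)*(S-1)) = j*((2*H+1)*(S-1)) + 2*((2*H+1)*(S-1)) := by ring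
  omega

/-- master pairwise inequality -/
lemma radio_pair (hH : 1 ≤ H) (hS : 2 ≤ S) (j j' : ℕ) (hjj : j < j') (hj' : j' ≤ nn H S - 1) :
    LL H S j + (nn H S - 2*(2*H+1)) ≤ LL H S j' +
      cycleDist (nn H S) ⟨XX H S j, XX_lt j⟩ ⟨XX H S j', XX_lt j'⟩ := by
  have h4 : nn H S = 4*(H*S)+2*H+2*S+1 := by unfold nn; ring
  have hWa : 2*H ≤ H*S := by nlinarith
  have hWb : S ≤ H*S := by nlinarith
  have hGv : (2*H+1)*(S-1) = 2*(H*S)+S-2*H-1 := Gval hH hS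
  have hsplit : j' = j+1 ∨ j' = j+2 ∨ j' = j+3 ∨ j+4 ≤ j' := by omega
  rcases hsplit with rfl | rfl | rfl | hge
  · exact chk1 hH hS j hj'
  · exact chk2 hH hS j hj'
  · exact chk3 hH hS j hj'
  · have h1 := L2step hH hS j (by omega)
    have h2 := L2step hH hS (j+2) (by omega)
    have h3 : LL H S (j+2+2) ≤ LL H S j' := LL_mono hH hS (j+2+2) j' (by omega) hj'
    have hne : (⟨XX H S j, XX_lt j⟩ : Fin (nn H S)) ≠ ⟨XX H S j', XX_lt j'⟩ := by
      intro he
      have hXX : XX H S j = XX H S j' := congrArg Fin.val he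
      have := Xinj hH (by omega) j j' (by omega) hj' hXX
      omega
    have hd := cycleDist_pos hne
    omega

/-- the upper bound construction -/
theorem upper (H S : ℕ) (hH : 1 ≤ H) (hS : 2 ≤ S) :
    ∃ f : Fin (nn H S) → ℕ, IsRadioLabeling (nn H S) (nn H S - 1 - 2*(2*H+1)) f ∧
      spanOf (nn H S) f ≤ ((2*H+1)*(S-1))*(nn H S - 1) + H := by
  have h4 : nn H S = 4*(H*S)+2*H+2*S+1 := by unfold nn; ring
  have hWa : 2*H ≤ H*S := by nlinarith
  have hn0 : 0 < nn H S := nn_pos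
  haveI : NeZero (nn H S) := ⟨by omega⟩
  set x : Fin (nn H S) → Fin (nn H S) := fun j => ⟨XX H S j.val, XX_lt _⟩ with hx
  have hxinj : Function.Injective x := by
    intro a b hab
    apply Fin.ext
    have hXX : XX H S a.val = XX H S b.val := congrArg Fin.val hab
    exact Xinj hH (by omega) a.val b.val (by omega) (by omega) hXX
  have hxbij := Finite.injective_iff_bijective.mp hxinj
  set e := Equiv.ofBijective x hxbij with he
  refine ⟨fun v => LL H S (e.symm v).val, ?_, ?_⟩
  · intro uu vv huv
    set a := e.symm uu with ha
    set b := e.symm vv with hb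
    have hea : x a = uu := e.apply_symm_apply uu
    have heb : x b = vv := e.apply_symm_apply vv
    have hane : a.val ≠ b.val := by
      intro hcon
      apply huv
      rw [← hea, ← heb]
      congr 1
      exact Fin.ext hcon
    have hKcast : ((nn H S - 1 - 2*(2*H+1) : ℕ) : ℤ) + 1 = (nn H S : ℤ) - 2*(2*H+1) := by
      omega
    have hdist : cycleDist (nn H S) uu vv =
        cycleDist (nn H S) ⟨XX H S a.val, XX_lt _⟩ ⟨XX H S b.val, XX_lt _⟩ := by
      rw [← hea, ← heb]
    rcases Nat.lt_or_ge a.val b.val with hlt | hge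
    · have hrp := radio_pair hH hS a.val b.val hlt (by omega)
      have hmono : LL H S a.val ≤ LL H S b.val := LL_mono hH hS _ _ (le_of_lt hlt) (by omega)
      have habs : |(LL H S a.val : ℤ) - LL H S b.val| = (LL H S b.val : ℤ) - LL H S a.val := by
        have h0 : (LL H S a.val : ℤ) ≤ (LL H S b.val : ℤ) := by exact_mod_cast hmono
        rw [abs_sub_comm, abs_of_nonneg (by linarith)]
      rw [habs, hKcast, hdist]
      have hcd : cycleDist (nn H S) ⟨XX H S a.val, XX_lt _⟩ ⟨XX H S b.val, XX_lt _⟩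
          = cycleDist (nn H S) ⟨XX H S a.val, XX_lt _⟩ ⟨XX H S b.val, XX_lt _⟩ := rfl
      omega
    · have hlt2 : b.val < a.val := by omega
      have hrp := radio_pair hH hS b.val a.val hlt2 (by omega)
      have hmono : LL H S b.val ≤ LL H S a.val := LL_mono hH hS _ _ (le_of_lt hlt2) (by omega)
      have habs : |(LL H S a.val : ℤ) - LL H S b.val| = (LL H S a.val : ℤ) - LL H S b.val := by
        have h0 : (LL H S b.val : ℤ) ≤ (LL H S a.val : ℤ) := by exact_mod_cast hmono
        rw [abs_of_nonneg (by linarith)]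
      have hdist2 : cycleDist (nn H S) ⟨XX H S a.val, XX_lt _⟩ ⟨XX H S b.val, XX_lt _⟩
          = cycleDist (nn H S) ⟨XX H S b.val, XX_lt _⟩ ⟨XX H S a.val, XX_lt _⟩ := by
        unfold cycleDist
        rw [Nat.min_comm]
      rw [habs, hKcast, hdist, hdist2]
      omega
  · -- span bound
    have hlast : ∀ v : Fin (nn H S), LL H S (e.symm v).val ≤ ((2*H+1)*(S-1))*(nn H S - 1) + H := by
      intro v
      have h1 : LL H S (e.symm v).val ≤ LL H S (nn H S - 1) :=
        LL_mono hH hS _ _ (by omega) (le_refl _)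
      have h2 : LL H S (nn H S - 1) = ((2*H+1)*(S-1))*(nn H S - 1) + H := by
        obtain ⟨H', rfl⟩ : ∃ H', H = H'+1 := ⟨H-1, by omega⟩
        have hje : nn (H'+1) S - 1 = je S H' (2*S) := by
          have : nn (H'+1) S = je S H' (2*S) + 1 := by unfold nn je; ring
          omega
        rw [hje]
        unfold LL
        rw [(char_even (H := H'+1) (S := S) H' (2*S) (by omega)).2.2]
        have : je S H' (2*S) * ((2*(H'+1)+1)*(S-1)) = ((2*(H'+1)+1)*(S-1)) * (je S H' (2*S)) := by ring
        omega
      omega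
    apply Finset.sup_le
    intro u _
    apply Finset.sup_le
    intro v _
    have h1 := hlast u
    show LL H S (e.symm u).val - LL H S (e.symm v).val ≤ ((2*H+1)*(S-1))*(nn H S - 1) + H
    omega

/-- main result in (H,S) parametrization -/
theorem main_eq (H S : ℕ) (hH : 1 ≤ H) (hS : 2 ≤ S) :
    rn (nn H S) (nn H S - 1 - 2*(2*H+1)) =
      (nn H S - 3*(2*H+1)) * ((nn H S - 1)/2) + ((2*H+1)-1)/2 := by
  have h4 : nn H S = 4*(H*S)+2*H+2*S+1 := by unfold nn; ring
  have hWa : 2*H ≤ H*S := by nlinarith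
  have hWb : S ≤ H*S := by nlinarith
  have hGv := Gval (H := H) (S := S) hH hS
  obtain ⟨f, hrf, hspan⟩ := upper H S hH hS
  have hT : ((2*H+1)*(S-1))*(nn H S - 1) + H
      = (nn H S - 3*(2*H+1)) * ((nn H S - 1)/2) + ((2*H+1)-1)/2 := by
    have e1 : nn H S - 3*(2*H+1) = 2*((2*H+1)*(S-1)) := by omega
    have e3 : 2*((2*H+1)*(S-1)) * ((nn H S - 1)/2)
        = ((2*H+1)*(S-1)) * (2*((nn H S - 1)/2)) := by ring
    have e4 : ((2*H+1)*(S-1)) * (2*((nn H S - 1)/2)) = ((2*H+1)*(S-1)) * (nn H S - 1) := by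
      congr 1
      omega
    rw [e1, e3, e4]
    omega
  have hlow : ∀ g : Fin (nn H S) → ℕ,
      IsRadioLabeling (nn H S) (nn H S - 1 - 2*(2*H+1)) g →
      (nn H S - 3*(2*H+1)) * ((nn H S - 1)/2) + ((2*H+1)-1)/2 ≤ spanOf (nn H S) g := by
    intro g hg
    exact lower_bound (nn H S) (2*H+1) (2*S+1) rfl (by omega) (by omega)
      ⟨H, by ring⟩ ⟨S, by ring⟩ g hg
  have hmem : spanOf (nn H S) f ∈
      {s | ∃ f' : Fin (nn H S) → ℕ,
        IsRadioLabeling (nn H S) (nn H S - 1 - 2*(2*H+1)) f' ∧ spanOf (nn H S) f' = s} :=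
    ⟨f, hrf, rfl⟩
  apply le_antisymm
  · apply le_trans (Nat.sInf_le hmem)
    calc spanOf (nn H S) f ≤ ((2*H+1)*(S-1))*(nn H S - 1) + H := hspan
    _ = _ := hT
  · apply le_csInf ⟨_, hmem⟩
    rintro b ⟨g, hg, rfl⟩
    exact hlow g hg

end Char

end Radio

open Radio in
/-- `n = 4q+i`, `k = 2q+2m+i-1`, `i ∈ {1,3}`, `0 ≤ m ≤ q-2`,
`h = q-m`: if `h ∣ n` then `rn_k(C_n) = LB(n,k) + (h-1)/2`. -/
theorem stmt18 (q m i : ℕ) (hi : i = 1 ∨ i = 3) (hm : m + 2 ≤ q)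
    (hdvd : (q - m) ∣ (4 * q + i)) :
    rn (4 * q + i) (2 * q + 2 * m + i - 1) =
      (3 * (2 * q + 2 * m + i - 1) + 3 - (4 * q + i)) / 2 * ((4 * q + i - 1) / 2) +
        (q - m - 1) / 2 := by
  obtain ⟨s, hs⟩ := hdvd
  have hodd_n : (4*q+i) % 2 = 1 := by rcases hi with rfl | rfl <;> omega
  have hodd_h : (q-m) % 2 = 1 := by
    rcases Nat.even_or_odd (q-m) with ⟨a, ha⟩ | ⟨a, ha⟩
    · exfalso
      have h1 : (q-m)*s = 2*(a*s) := by rw [ha]; ring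
      omega
    · omega
  have hsodd : s % 2 = 1 := by
    rcases Nat.even_or_odd s with ⟨a, ha⟩ | ⟨a, ha⟩
    · exfalso
      have h1 : (q-m)*s = 2*((q-m)*a) := by rw [ha]; ring
      omega
    · omega
  have hs5 : 5 ≤ s := by
    by_contra hcon
    have h1 : (q-m)*s ≤ (q-m)*4 := Nat.mul_le_mul_left (q-m) (by omega)
    have h2 : (q-m)*4 = 4*(q-m) := by ring
    omega
  obtain ⟨H, hHe⟩ : ∃ H, q - m = 2*H+1 := ⟨(q-m)/2, by omega⟩
  obtain ⟨S, hSe⟩ : ∃ S, s = 2*S+1 := ⟨s/2, by omega⟩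
  have hH1 : 1 ≤ H := by omega
  have hS2 : 2 ≤ S := by omega
  have hnn : nn H S = 4*q+i := by
    have : nn H S = (q-m)*s := by unfold nn; rw [← hHe, ← hSe]
    omega
  have hmain := main_eq H S hH1 hS2
  rw [hnn] at hmain
  have hk : (4*q+i) - 1 - 2*(2*H+1) = 2*q+2*m+i-1 := by omega
  rw [hk] at hmain
  rw [hmain]
  have e1 : (4*q+i) - 3*(2*H+1) = (3*(2*q+2*m+i-1)+3-(4*q+i))/2 := by
    rcases hi with rfl | rfl <;> omega
  have e2 : ((2*H+1)-1)/2 = (q-m-1)/2 := by omega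
  rw [e1, e2]
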